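/- arXiv:2403.14408 — 8 statements merged into one kernel-verified Lean document; each statement's English description precedes it below -/
import Mathlib

section
/- Let m ∈ ℕ, let F, G : ℝ × ℝ^m → ℝ^m be continuously differentiable, let X₀ ∈ ℝ^m, T > 0 and κ₀ > 0. Assume Y : [0,T] → ℝ^m satisfies Y'(t) = F(t, Y(t)) with Y(0) = X₀, and that for every κ ∈ (0,κ₀] the map X_κ : [0,T] → ℝ^m satisfies X_κ'(t) = F(t, X_κ(t)) + κ·G(t, X_κ(t)) with X_κ(0) = X₀, all X_κ taking values in a fixed compact set. Then there exist t₀ ∈ (0,T], κ₁ ∈ (0,κ₀] and C > 0 such that ‖X_κ(t) − Y(t) − κ·t·G(0,X₀)‖ ≤ C·κ·t² for all t ∈ [0,t₀] and all κ ∈ (0,κ₁]. In particular ‖X_κ(t) − Y(t)‖ = κ·t·‖G(0,X₀)‖ + O(κ t²). -/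
/-!
With `E(t) = X_κ(t) - Y(t) - κ t G(0, X₀)` we have `E(0) = 0` and
`E' = (F(t, X_κ) - F(t, Y)) + κ (G(t, X_κ) - G(0, X₀))`. On a closed ball containing all
trajectories, `F` and `G` are Lipschitz and `X_κ` moves at bounded speed `M`, so
`‖E'‖ ≤ L_F ‖E‖ + κ (L_F ‖G(0, X₀)‖ + L_G (1 + M)) t`, and Grönwall's inequality with `E(0) = 0`
gives `‖E(t)‖ ≤ C κ t²`.
-/

open Set Metric Real NNReal

theorem gronwallBound_zero_le {K ε x : ℝ} (hK : 0 ≤ K) (hε : 0 ≤ ε) :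
    gronwallBound 0 K ε x ≤ ε * x * exp (K * x) := by
  rcases hK.eq_or_lt with rfl | hK
  · simp [gronwallBound_K0]
  have hexp : exp (K * x) - 1 ≤ K * x * exp (K * x) := by
    have := mul_le_mul_of_nonneg_left (one_sub_le_exp_neg (K * x)) (exp_pos (K * x)).le
    rw [← exp_add, add_neg_cancel, exp_zero] at this
    linarith
  calc gronwallBound 0 K ε x = ε / K * (exp (K * x) - 1) := by
        simp [gronwallBound_of_K_ne_0 hK.ne']
    _ ≤ ε / K * (K * x * exp (K * x)) := by gcongr
    _ = ε * x * exp (K * x) := by field_simp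

section

variable {E : Type*} [NormedAddCommGroup E] [NormedSpace ℝ E]

theorem norm_le_mul_sq_mul_exp_of_norm_deriv_le {f f' : ℝ → E} {K c t : ℝ} (hK : 0 ≤ K)
    (hc : 0 ≤ c) (ht : 0 ≤ t) (hf : ∀ s ∈ Icc 0 t, HasDerivAt f (f' s) s) (hf0 : f 0 = 0)
    (bound : ∀ s ∈ Ico 0 t, ‖f' s‖ ≤ K * ‖f s‖ + c * s) :
    ‖f t‖ ≤ c * t ^ 2 * exp (K * t) := by
  have hgron := norm_le_gronwallBound_of_norm_deriv_right_le (δ := 0) (ε := c * t)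
    (fun s hs => (hf s hs).continuousAt.continuousWithinAt)
    (fun s hs => (hf s (Ico_subset_Icc_self hs)).hasDerivWithinAt) (by simp [hf0])
    (fun s hs => (bound s hs).trans (by gcongr; exact hs.2.le)) t ⟨ht, le_rfl⟩
  rw [sub_zero] at hgron
  calc ‖f t‖ ≤ c * t * t * exp (K * t) := hgron.trans (gronwallBound_zero_le hK (by positivity))
    _ = c * t ^ 2 * exp (K * t) := by ring

theorem norm_perturbed_sub_sub_smul_le {F G : ℝ × E → E} {B : Set (ℝ × E)} {LF LG : ℝ≥0}
    (hF : LipschitzOnWith LF F B) (hG : LipschitzOnWith LG G B) {x y : ℝ → E} {x₀ : E}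
    {κ M T : ℝ} (hκ : 0 ≤ κ) (hM : 0 ≤ M)
    (hx : ∀ s ∈ Icc 0 T, HasDerivAt x (F (s, x s) + κ • G (s, x s)) s)
    (hy : ∀ s ∈ Icc 0 T, HasDerivAt y (F (s, y s)) s) (hx0 : x 0 = x₀) (hy0 : y 0 = x₀)
    (hxB : ∀ s ∈ Icc 0 T, (s, x s) ∈ B) (hyB : ∀ s ∈ Icc 0 T, (s, y s) ∈ B)
    (hxM : ∀ s ∈ Icc 0 T, ‖x s - x₀‖ ≤ M * s) {t : ℝ} (ht : t ∈ Icc 0 T) :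
    ‖x t - y t - (κ * t) • G (0, x₀)‖ ≤
      κ * (LF * ‖G (0, x₀)‖ + LG * (1 + M)) * t ^ 2 * exp (LF * t) := by
  set G₀ := G (0, x₀)
  have htT : Icc 0 t ⊆ Icc 0 T := Icc_subset_Icc_right ht.2
  have hx₀B : ((0 : ℝ), x₀) ∈ B := hx0 ▸ hxB 0 ⟨le_rfl, ht.1.trans ht.2⟩
  refine norm_le_mul_sq_mul_exp_of_norm_deriv_le (f := fun s => x s - y s - (κ * s) • G₀)
    (f' := fun s => (F (s, x s) - F (s, y s)) + κ • (G (s, x s) - G₀)) LF.2 (by positivity) ht.1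
    (fun s hs => ?_) (by simp [hx0, hy0]) (fun s hs => ?_)
  · refine (((hx s (htT hs)).sub (hy s (htT hs))).sub
      (((hasDerivAt_id s).const_mul κ).smul_const G₀)).congr_deriv ?_
    rw [mul_one, smul_sub]
    abel
  have hs' : s ∈ Icc 0 T := htT (Ico_subset_Icc_self hs)
  have hF_diff : ‖F (s, x s) - F (s, y s)‖ ≤ LF * (‖x s - y s - (κ * s) • G₀‖ + κ * s * ‖G₀‖) :=
    calc ‖F (s, x s) - F (s, y s)‖ ≤ LF * ‖x s - y s‖ := by
          simpa using hF.norm_sub_le (hxB s hs') (hyB s hs')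
      _ ≤ LF * (‖x s - y s - (κ * s) • G₀‖ + κ * s * ‖G₀‖) := by
          have := norm_le_norm_add_norm_sub' (x s - y s) ((κ * s) • G₀)
          rw [norm_smul, norm_of_nonneg (mul_nonneg hκ hs.1)] at this
          gcongr
          linarith
  have hG_diff : ‖G (s, x s) - G₀‖ ≤ LG * ((1 + M) * s) :=
    calc ‖G (s, x s) - G₀‖ ≤ LG * ‖(s, x s) - (0, x₀)‖ := hG.norm_sub_le (hxB s hs') hx₀B
      _ ≤ LG * ((1 + M) * s) := by
          gcongr
          rw [Prod.norm_def]
          simp only [Prod.fst_sub, Prod.snd_sub, sub_zero, norm_of_nonneg hs.1]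
          exact max_le (by nlinarith [hs.1]) ((hxM s hs').trans (by nlinarith [hs.1]))
  calc ‖(F (s, x s) - F (s, y s)) + κ • (G (s, x s) - G₀)‖
      ≤ ‖F (s, x s) - F (s, y s)‖ + κ * ‖G (s, x s) - G₀‖ := by
        simpa [norm_smul, abs_of_nonneg hκ] using norm_add_le _ (κ • (G (s, x s) - G₀))
    _ ≤ LF * (‖x s - y s - (κ * s) • G₀‖ + κ * s * ‖G₀‖) + κ * (LG * ((1 + M) * s)) := by
        gcongr
    _ = LF * ‖x s - y s - (κ * s) • G₀‖ + κ * (LF * ‖G₀‖ + LG * (1 + M)) * s := by ring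

theorem exists_norm_sub_apply_zero_le_mul {F G : ℝ × E → E} (hF : Continuous F)
    (hG : Continuous G) {B : Set (ℝ × E)} (hB : IsCompact B) {κ₀ T : ℝ} {X : ℝ → ℝ → E}
    (hX : ∀ κ ∈ Ioc 0 κ₀, ∀ t ∈ Icc 0 T, HasDerivAt (X κ) (F (t, X κ t) + κ • G (t, X κ t)) t)
    (hXB : ∀ κ ∈ Ioc 0 κ₀, ∀ t ∈ Icc 0 T, (t, X κ t) ∈ B) :
    ∃ M ≥ 0, ∀ κ ∈ Ioc 0 κ₀, ∀ t ∈ Icc 0 T, ‖X κ t - X κ 0‖ ≤ M * t := by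
  obtain ⟨M, hM⟩ := ((isCompact_Icc (a := 0) (b := κ₀)).prod hB).exists_bound_of_continuousOn
    (f := fun q : ℝ × ℝ × E => F q.2 + q.1 • G q.2) (by fun_prop)
  refine ⟨max M 0, le_max_right M 0, fun κ hκ t ht => ?_⟩
  simpa using norm_image_sub_le_of_norm_deriv_le_segment'
    (fun t ht => (hX κ hκ t ht).hasDerivWithinAt) (fun t ht => (hM (κ, t, X κ t)
      ⟨Ioc_subset_Icc_self hκ, hXB κ hκ t (Ico_subset_Icc_self ht)⟩).trans (le_max_left M 0)) t ht

end

/-- Perturbation of an ODE by a small vector field `κ·G`: first-order expansion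
`X_κ(t) = Y(t) + κ t G(0,X₀) + O(κ t²)` for small times and small `κ`. -/
theorem stmt_0 (m : ℕ)
    (F G : ℝ × EuclideanSpace ℝ (Fin m) → EuclideanSpace ℝ (Fin m))
    (hF : ContDiff ℝ 1 F) (hG : ContDiff ℝ 1 G)
    (X₀ : EuclideanSpace ℝ (Fin m)) (T κ₀ : ℝ) (hT : 0 < T) (hκ₀ : 0 < κ₀)
    (Y : ℝ → EuclideanSpace ℝ (Fin m))
    (hY : ∀ t ∈ Set.Icc (0:ℝ) T, HasDerivAt Y (F (t, Y t)) t)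
    (hY0 : Y 0 = X₀)
    (X : ℝ → ℝ → EuclideanSpace ℝ (Fin m))
    (hX : ∀ κ ∈ Set.Ioc (0:ℝ) κ₀, ∀ t ∈ Set.Icc (0:ℝ) T,
      HasDerivAt (X κ) (F (t, X κ t) + κ • G (t, X κ t)) t)
    (hX0 : ∀ κ ∈ Set.Ioc (0:ℝ) κ₀, X κ 0 = X₀)
    (K : Set (EuclideanSpace ℝ (Fin m))) (hK : IsCompact K)
    (hXK : ∀ κ ∈ Set.Ioc (0:ℝ) κ₀, ∀ t ∈ Set.Icc (0:ℝ) T, X κ t ∈ K) :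
    ∃ t₀ ∈ Set.Ioc (0:ℝ) T, ∃ κ₁ ∈ Set.Ioc (0:ℝ) κ₀, ∃ C > (0:ℝ),
      ∀ t ∈ Set.Icc (0:ℝ) t₀, ∀ κ ∈ Set.Ioc (0:ℝ) κ₁,
        ‖X κ t - Y t - (κ * t) • G (0, X₀)‖ ≤ C * κ * t ^ 2 := by
  have hYc : ContinuousOn Y (Icc 0 T) := fun s hs => (hY s hs).continuousAt.continuousWithinAt
  obtain ⟨R, hR⟩ := ((isCompact_Icc (a := 0) (b := T)).prod
    (hK.union (isCompact_Icc.image_of_continuousOn hYc))).isBounded.subset_closedBall 0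
  have hYB : ∀ s ∈ Icc 0 T, (s, Y s) ∈ closedBall 0 R := fun s hs => hR ⟨hs, .inr ⟨s, hs, rfl⟩⟩
  have hXB : ∀ κ ∈ Ioc 0 κ₀, ∀ s ∈ Icc 0 T, (s, X κ s) ∈ closedBall 0 R :=
    fun κ hκ s hs => hR ⟨hs, .inl (hXK κ hκ s hs)⟩
  obtain ⟨LF, hLF⟩ := hF.contDiffOn.exists_lipschitzOnWith one_ne_zero (convex_closedBall 0 R)
    (isCompact_closedBall 0 R)
  obtain ⟨LG, hLG⟩ := hG.contDiffOn.exists_lipschitzOnWith one_ne_zero (convex_closedBall 0 R)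
    (isCompact_closedBall 0 R)
  obtain ⟨M, hM0, hXM⟩ := exists_norm_sub_apply_zero_le_mul hF.continuous hG.continuous
    (isCompact_closedBall 0 R) hX hXB
  set C₁ := LF * ‖G (0, X₀)‖ + LG * (1 + M)
  refine ⟨T, ⟨hT, le_rfl⟩, κ₀, ⟨hκ₀, le_rfl⟩, (C₁ + 1) * exp (LF * T), by positivity,
    fun t ht κ hκ => ?_⟩
  calc ‖X κ t - Y t - (κ * t) • G (0, X₀)‖ ≤ κ * C₁ * t ^ 2 * exp (LF * t) :=
        norm_perturbed_sub_sub_smul_le hLF hLG hκ.1.le hM0 (hX κ hκ) hY (hX0 κ hκ) hY0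
          (hXB κ hκ) hYB (fun s hs => hX0 κ hκ ▸ hXM κ hκ s hs) ht
    _ = C₁ * exp (LF * t) * (κ * t ^ 2) := by ring
    _ ≤ (C₁ + 1) * exp (LF * T) * (κ * t ^ 2) := by
        have := mul_nonneg hκ.1.le (sq_nonneg t)
        gcongr
        · linarith
        · exact ht.2
    _ = (C₁ + 1) * exp (LF * T) * κ * t ^ 2 := by ring
end

section
/- Let C = (C₁, C₂, C₃) : ℝ × ℝ → ℝ³ be twice continuously differentiable with C₃ ≡ 0, let x₀ ∈ ℝ satisfy ∂ₓC₁(0, x₀) ≠ 0, and let n⁰ ∈ ℝ³ be a vector whose third component n⁰₃ is nonzero. Suppose n : ℝ × ℝ → ℝ³ is twice continuously differentiable and for each parameter x solves the Landau–Lifshitz equation ∂ₜ n(t,x) = C(t,x) × n(t,x) (cross product in ℝ³) with the x-independent initial condition n(0,x) = n⁰. Then there exist c₀ > 0, t₀ > 0 and r₀ > 0 such that |n(t,x) − n(t,y)| ≥ c₀·t·|x − y| whenever |x − x₀| + |y − x₀| ≤ r₀ and 0 ≤ t ≤ t₀. -/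
/-- The cross product on `ℝ³` realized on `EuclideanSpace ℝ (Fin 3)`. -/
noncomputable def cross3 (u v : EuclideanSpace ℝ (Fin 3)) : EuclideanSpace ℝ (Fin 3) :=
  (WithLp.equiv 2 (Fin 3 → ℝ)).symm
    (crossProduct ((WithLp.equiv 2 (Fin 3 → ℝ)) u) ((WithLp.equiv 2 (Fin 3 → ℝ)) v))

/-!
Only the second component of `n` is needed. With `C₃ = 0` it satisfies `∂ₜ n₂ = P := -C₁ n₃`,
and `∂ₓ P (0, x₀) = -∂ₓ C₁ (0, x₀) n⁰₃ ≠ 0` because `n(0, ·) = n⁰` is constant. By continuity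
`∂ₓ P` keeps a sign and stays away from zero on a box around `(0, x₀)`; two applications of the
mean value inequality, first in `x` and then in `t`, give
`|n₂(t, x) - n₂(t, y)| ≥ c t |x - y|` on that box.
-/

open Set

lemma cross3_apply_one (u v : EuclideanSpace ℝ (Fin 3)) :
    cross3 u v 1 = u 2 * v 0 - u 0 * v 2 := by
  simp [cross3, cross_apply]

lemma mul_sub_le_sub_of_hasDerivAt {f f' : ℝ → ℝ} {a b c : ℝ} (hab : a ≤ b)
    (hf : ∀ u ∈ Icc a b, HasDerivAt f (f' u) u) (hc : ∀ u ∈ Icc a b, c ≤ f' u) :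
    c * (b - a) ≤ f b - f a :=
  (convex_Icc a b).mul_sub_le_image_sub_of_le_deriv
    (fun u hu => (hf u hu).continuousAt.continuousWithinAt)
    (fun u hu => (hf u (interior_subset hu)).differentiableAt.differentiableWithinAt)
    (fun u hu => (hf u (interior_subset hu)).deriv ▸ hc u (interior_subset hu))
    a (left_mem_Icc.2 hab) b (right_mem_Icc.2 hab) hab

lemma DifferentiableAt.hasDerivAt_fderiv_apply_right {E : Type*} [NormedAddCommGroup E]
    [NormedSpace ℝ E] {P : ℝ × ℝ → E} {t x : ℝ} (h : DifferentiableAt ℝ P (t, x)) :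
    HasDerivAt (fun u => P (t, u)) (fderiv ℝ P (t, x) (0, 1)) x :=
  h.hasFDerivAt.comp_hasDerivAt x ((hasDerivAt_const x t).prodMk (hasDerivAt_id x))

section Separation

variable {F P : ℝ × ℝ → ℝ} {x₀ : ℝ}

lemma exists_mul_sub_le_sub_of_deriv_pos (hP : ContDiff ℝ 1 P)
    (hF : ∀ t x, HasDerivAt (fun s => F (s, x)) (P (t, x)) t)
    (hF0 : ∀ x y, F (0, x) = F (0, y)) (hPx : 0 < deriv (fun x => P (0, x)) x₀) :
    ∃ c > 0, ∃ r > 0, ∀ t x y, x₀ - r ≤ y → y ≤ x → x ≤ x₀ + r → 0 ≤ t → t ≤ r →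
      c * t * (x - y) ≤ F (t, x) - F (t, y) := by
  set c := deriv (fun x => P (0, x)) x₀ / 2
  have hc : 0 < c := half_pos hPx
  have hPdiff : Differentiable ℝ P := hP.differentiable one_ne_zero
  have hPx_cont : Continuous fun p => fderiv ℝ P p (0, 1) :=
    (hP.continuous_fderiv one_ne_zero).clm_apply continuous_const
  have hPx_at : fderiv ℝ P (0, x₀) (0, 1) = 2 * c := by
    rw [((hPdiff _).hasDerivAt_fderiv_apply_right).deriv.symm]; ring
  obtain ⟨r, hr, hbox⟩ : ∃ r > 0, ∀ p ∈ Metric.closedBall ((0 : ℝ), x₀) r,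
      c < fderiv ℝ P p (0, 1) :=
    Metric.nhds_basis_closedBall.eventually_iff.mp <| hPx_cont.continuousAt.eventually <|
      lt_mem_nhds (show c < fderiv ℝ P (0, x₀) (0, 1) by rw [hPx_at]; linarith)
  refine ⟨c, hc, r, hr, fun t x y hy hyx hx ht0 htr => ?_⟩
  have hP_sub : ∀ s ∈ Icc 0 t, c * (x - y) ≤ P (s, x) - P (s, y) := fun s hs =>
    mul_sub_le_sub_of_hasDerivAt hyx (fun u _ => (hPdiff _).hasDerivAt_fderiv_apply_right)
      fun u hu => (hbox (s, u) <| by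
        rw [Metric.mem_closedBall, Prod.dist_eq, Real.dist_eq, Real.dist_eq, sub_zero,
          abs_of_nonneg hs.1, max_le_iff, abs_sub_le_iff]
        exact ⟨hs.2.trans htr, by linarith [hu.2], by linarith [hu.1]⟩).le
  have hgrowth := mul_sub_le_sub_of_hasDerivAt ht0 (fun s _ => (hF s x).fun_sub (hF s y)) hP_sub
  rw [hF0 x y, sub_self, sub_zero] at hgrowth
  linarith

lemma exists_mul_abs_sub_le_abs_sub_of_deriv_ne_zero (hP : ContDiff ℝ 1 P)
    (hF : ∀ t x, HasDerivAt (fun s => F (s, x)) (P (t, x)) t)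
    (hF0 : ∀ x y, F (0, x) = F (0, y)) (hPx : deriv (fun x => P (0, x)) x₀ ≠ 0) :
    ∃ c > 0, ∃ r > 0, ∀ t x y, |x - x₀| + |y - x₀| ≤ r → 0 ≤ t → t ≤ r →
      c * t * |x - y| ≤ |F (t, x) - F (t, y)| := by
  obtain ⟨c, hc, r, hr, hsep⟩ : ∃ c > 0, ∃ r > 0, ∀ t x y, x₀ - r ≤ y → y ≤ x → x ≤ x₀ + r →
      0 ≤ t → t ≤ r → c * t * (x - y) ≤ |F (t, x) - F (t, y)| := by
    rcases hPx.lt_or_gt with hneg | hpos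
    · have hPx' : 0 < deriv (fun x => -P (0, x)) x₀ := by rw [deriv.fun_neg]; linarith
      obtain ⟨c, hc, r, hr, h⟩ := exists_mul_sub_le_sub_of_deriv_pos (F := -F) hP.neg
        (fun t x => (hF t x).neg) (fun x y => by simp [hF0 x y]) hPx'
      refine ⟨c, hc, r, hr, fun t x y h1 h2 h3 h4 h5 => (h t x y h1 h2 h3 h4 h5).trans ?_⟩
      rw [Pi.neg_apply, Pi.neg_apply, neg_sub_neg, abs_sub_comm]
      exact le_abs_self _
    · obtain ⟨c, hc, r, hr, h⟩ := exists_mul_sub_le_sub_of_deriv_pos hP hF hF0 hpos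
      exact ⟨c, hc, r, hr, fun t x y h1 h2 h3 h4 h5 =>
        (h t x y h1 h2 h3 h4 h5).trans (le_abs_self _)⟩
  refine ⟨c, hc, r, hr, fun t x y hxy ht0 htr => ?_⟩
  have hx := abs_sub_le_iff.mp (le_of_add_le_of_nonneg_left hxy (abs_nonneg _))
  have hy := abs_sub_le_iff.mp (le_of_add_le_of_nonneg_right hxy (abs_nonneg _))
  rcases le_total y x with hyx | hxy'
  · rw [abs_of_nonneg (sub_nonneg.mpr hyx)]
    exact hsep t x y (by linarith) hyx (by linarith) ht0 htr
  · rw [abs_sub_comm, abs_sub_comm (F _), abs_of_nonneg (sub_nonneg.mpr hxy')]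
    exact hsep t y x (by linarith) hxy' (by linarith) ht0 htr

end Separation

/-- Separation of solutions of the parameter-dependent Landau–Lifshitz equation
`∂ₜ n(t,x) = C(t,x) × n(t,x)` with `C₃ ≡ 0`, `∂ₓC₁(0,x₀) ≠ 0` and `n⁰₃ ≠ 0`. -/
theorem stmt_2
    (C : ℝ × ℝ → EuclideanSpace ℝ (Fin 3)) (hC : ContDiff ℝ 2 C)
    (hC3 : ∀ t x : ℝ, C (t, x) 2 = 0)
    (x₀ : ℝ) (hC1 : deriv (fun x => C (0, x) 0) x₀ ≠ 0)
    (n₀ : EuclideanSpace ℝ (Fin 3)) (hn₀3 : n₀ 2 ≠ 0)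
    (n : ℝ × ℝ → EuclideanSpace ℝ (Fin 3)) (hn : ContDiff ℝ 2 n)
    (hLL : ∀ t x : ℝ, HasDerivAt (fun s => n (s, x)) (cross3 (C (t, x)) (n (t, x))) t)
    (hinit : ∀ x : ℝ, n (0, x) = n₀) :
    ∃ c₀ > (0:ℝ), ∃ t₀ > (0:ℝ), ∃ r₀ > (0:ℝ), ∀ t x y : ℝ,
      |x - x₀| + |y - x₀| ≤ r₀ → 0 ≤ t → t ≤ t₀ →
        c₀ * t * |x - y| ≤ ‖n (t, x) - n (t, y)‖ := by
  have hP : ContDiff ℝ 1 fun p => -(C p 0 * n p 2) :=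
    ((contDiff_euclidean.mp hC 0).mul (contDiff_euclidean.mp hn 2)).neg.of_le (by norm_num)
  have hF : ∀ t x, HasDerivAt (fun s => n (s, x) 1) (-(C (t, x) 0 * n (t, x) 2)) t := by
    intro t x
    have h := (EuclideanSpace.proj (1 : Fin 3)).hasFDerivAt.comp_hasDerivAt t (hLL t x)
    have hproj : EuclideanSpace.proj (1 : Fin 3) (cross3 (C (t, x)) (n (t, x)))
        = -(C (t, x) 0 * n (t, x) 2) := by simp [cross3_apply_one, hC3]
    rwa [hproj] at h
  have hPx : deriv (fun x => -(C (0, x) 0 * n (0, x) 2)) x₀ ≠ 0 := by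
    simp only [hinit, deriv.fun_neg, deriv_mul_const_field]
    exact neg_ne_zero.mpr (mul_ne_zero hC1 hn₀3)
  obtain ⟨c, hc, r, hr, hsep⟩ := exists_mul_abs_sub_le_abs_sub_of_deriv_ne_zero
    (F := fun p => n p 1) hP hF (fun x y => by simp only [hinit]) hPx
  refine ⟨c, hc, r, hr, r, hr, fun t x y hxy ht0 htr => (hsep t x y hxy ht0 htr).trans ?_⟩
  simpa using PiLp.norm_apply_le (n (t, x) - n (t, y)) 1
end

section
/- With the notation of the context, for all θ, φ ∈ ℝ: S₁(θ,φ) = ((cosθ+1)/2 + ((cosθ−1)/2)·cos 2φ)·S₁ + ((cosθ−1)/2)·sin 2φ·S₂ + cosφ·sinθ·S₃; and S₂(θ,φ) = ((cosθ−1)/2)·sin 2φ·S₁ + ((cosθ+1)/2 − ((cosθ−1)/2)·cos 2φ)·S₂ + sinθ·sinφ·S₃. -/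
/-! With `c = cos φ`, `s = sin φ` one has `(θ/2) • L(φ) = θ • M` for `M = i (s S₁ - c S₂)`.
In the rotated frame `X = c S₁ + s S₂`, `U = s S₁ - c S₂`, the derivation `x ↦ x M - M x` kills
`U` and maps `X ↦ S₃ ↦ -X`. Hence `t ↦ cos t X + sin t S₃` solves the same linear ODE as
`t ↦ exp (-t M) X exp (t M)`, so conjugation by `exp (θ M)` fixes `U` and rotates `X` towards
`S₃` by the angle `θ`. Writing `S₁ = c X + s U` and `S₂ = s X - c U` gives the formulas. -/

open Complex NormedSpace

section ConjugationByExp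

variable {A : Type*} [NormedRing A] [NormedAlgebra ℝ A] [CompleteSpace A]

theorem exp_neg_mul_exp_self (x : A) : exp (-x) * exp x = 1 := by
  let : NormedAlgebra ℚ A := .restrictScalars ℚ ℝ A
  rw [← exp_add_of_commute (Commute.refl x).neg_left, neg_add_cancel, NormedSpace.exp_zero]

theorem exp_neg_smul_mul_mul_exp_smul_of_hasDerivAt (M : A) {c : ℝ → A}
    (hc : ∀ t, HasDerivAt c (c t * M - M * c t) t) (θ : ℝ) :
    exp (-(θ • M)) * c 0 * exp (θ • M) = c θ := by
  set g : ℝ → A := fun t => exp (t • M) * c t * exp (-(t • M))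
  have hg : ∀ t, HasDerivAt g 0 t := by
    intro t
    have hE : Commute (exp (t • M)) M := ((Commute.refl M).smul_left t).exp_left
    have hE' : Commute (exp (-(t • M))) M := ((Commute.refl M).smul_left t).neg_left.exp_left
    have hexp' : HasDerivAt (fun u : ℝ => exp (-(u • M))) (exp (-(t • M)) * -M) t := by
      simpa only [smul_neg] using hasDerivAt_exp_smul_const (-M) t
    refine (((hasDerivAt_exp_smul_const' M t).mul (hc t)).mul hexp').congr_deriv ?_
    calc _ = M * exp (t • M) * c t * exp (-(t • M)) - exp (t • M) * M * c t * exp (-(t • M))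
          + exp (t • M) * c t * (M * exp (-(t • M)))
          - exp (t • M) * c t * (exp (-(t • M)) * M) := by
            simp only [Pi.mul_apply]; noncomm_ring
      _ = 0 := by rw [hE.eq, hE'.eq]; noncomm_ring
  have hconst : g θ = g 0 :=
    is_const_of_deriv_eq_zero (fun t => (hg t).differentiableAt) (fun t => (hg t).deriv) θ 0
  calc exp (-(θ • M)) * c 0 * exp (θ • M)
      = exp (-(θ • M)) * g θ * exp (θ • M) := by simp [hconst, g]
    _ = (exp (-(θ • M)) * exp (θ • M)) * c θ * (exp (-(θ • M)) * exp (θ • M)) := by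
        simp only [g]; noncomm_ring
    _ = c θ := by rw [exp_neg_mul_exp_self]; simp

theorem exp_neg_smul_mul_mul_exp_smul_eq_cos_add_sin (M X Z : A)
    (hX : X * M - M * X = Z) (hZ : Z * M - M * Z = -X) (θ : ℝ) :
    exp (-(θ • M)) * X * exp (θ • M) = Real.cos θ • X + Real.sin θ • Z := by
  have hc : ∀ t : ℝ, HasDerivAt (fun t => Real.cos t • X + Real.sin t • Z)
      ((Real.cos t • X + Real.sin t • Z) * M - M * (Real.cos t • X + Real.sin t • Z)) t := by
    intro t
    refine (((Real.hasDerivAt_cos t).smul_const X).add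
      ((Real.hasDerivAt_sin t).smul_const Z)).congr_deriv ?_
    calc _ = Real.cos t • (X * M - M * X) + Real.sin t • (Z * M - M * Z) := by
          rw [hX, hZ]; module
      _ = _ := by simp only [add_mul, mul_add, smul_mul_assoc, mul_smul_comm]; module
  simpa using exp_neg_smul_mul_mul_exp_smul_of_hasDerivAt M hc θ

theorem exp_neg_smul_mul_mul_exp_smul_of_commute {M U : A} (h : Commute U M) (θ : ℝ) :
    exp (-(θ • M)) * U * exp (θ • M) = U := by
  refine exp_neg_smul_mul_mul_exp_smul_of_hasDerivAt (c := fun _ => U) M (fun t => ?_) θ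
  simpa [h.eq] using hasDerivAt_const t U

end ConjugationByExp

theorem cexp_smul_sub_sub_cexp_neg_smul_add {V : Type*} [AddCommGroup V] [Module ℂ V]
    (x y : V) (z : ℂ) :
    Complex.exp (I * z) • (x - I • y) - Complex.exp (-(I * z)) • (x + I • y)
      = (2 * I) • (Complex.sin z • x - Complex.cos z • y) := by
  rw [show -(I * z) = -z * I by ring, mul_comm, Complex.exp_mul_I, Complex.exp_mul_I,
    Complex.cos_neg, Complex.sin_neg]
  match_scalars <;> ring

section SU2

variable {A : Type*} [Ring A] [Algebra ℂ A] {S₁ S₂ S₃ : A}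

theorem su2_rotated_commutator_eq (h12 : S₁ * S₂ - S₂ * S₁ = I • S₃) {c s : ℂ}
    (hcs : c ^ 2 + s ^ 2 = 1) :
    (c • S₁ + s • S₂) * (I • (s • S₁ - c • S₂)) - (I • (s • S₁ - c • S₂)) * (c • S₁ + s • S₂)
      = S₃ := by
  calc _ = (-(c ^ 2 + s ^ 2) * I) • (S₁ * S₂ - S₂ * S₁) := by
        simp only [mul_add, add_mul, mul_sub, sub_mul, smul_mul_assoc, mul_smul_comm, smul_smul]
        module
    _ = S₃ := by rw [h12, hcs, smul_smul]; simp

theorem su2_S₃_commutator_eq (h23 : S₂ * S₃ - S₃ * S₂ = I • S₁)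
    (h31 : S₃ * S₁ - S₁ * S₃ = I • S₂) (c s : ℂ) :
    S₃ * (I • (s • S₁ - c • S₂)) - (I • (s • S₁ - c • S₂)) * S₃ = -(c • S₁ + s • S₂) := by
  calc _ = (I * s) • (S₃ * S₁ - S₁ * S₃) + (I * c) • (S₂ * S₃ - S₃ * S₂) := by
        simp only [mul_sub, sub_mul, smul_mul_assoc, mul_smul_comm]
        module
    _ = _ := by rw [h23, h31]; match_scalars <;> ring_nf <;> simp

end SU2

theorem su2_conj_exp_smul {A : Type*} [NormedRing A] [NormedAlgebra ℂ A] [CompleteSpace A]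
    {S₁ S₂ S₃ : A} (h12 : S₁ * S₂ - S₂ * S₁ = I • S₃) (h23 : S₂ * S₃ - S₃ * S₂ = I • S₁)
    (h31 : S₃ * S₁ - S₁ * S₃ = I • S₂) {c s : ℂ} (hcs : c ^ 2 + s ^ 2 = 1) (θ : ℝ) :
    NormedSpace.exp (-(θ • (I • (s • S₁ - c • S₂)))) * S₁ *
          NormedSpace.exp (θ • (I • (s • S₁ - c • S₂)))
        = (c ^ 2 * Complex.cos θ + s ^ 2) • S₁ + (c * s * (Complex.cos θ - 1)) • S₂
          + (c * Complex.sin θ) • S₃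
      ∧ NormedSpace.exp (-(θ • (I • (s • S₁ - c • S₂)))) * S₂ *
          NormedSpace.exp (θ • (I • (s • S₁ - c • S₂)))
        = (c * s * (Complex.cos θ - 1)) • S₁ + (s ^ 2 * Complex.cos θ + c ^ 2) • S₂
          + (s * Complex.sin θ) • S₃ := by
  set X : A := c • S₁ + s • S₂
  set U : A := s • S₁ - c • S₂
  set Tinv : A := NormedSpace.exp (-(θ • (I • U)))
  set T : A := NormedSpace.exp (θ • (I • U))
  have hX : Tinv * X * T = Complex.cos θ • X + Complex.sin θ • S₃ := by
    simp only [Tinv, T, ← Complex.ofReal_cos, ← Complex.ofReal_sin, Complex.coe_smul]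
    exact exp_neg_smul_mul_mul_exp_smul_eq_cos_add_sin _ _ _
      (su2_rotated_commutator_eq h12 hcs) (su2_S₃_commutator_eq h23 h31 c s) θ
  have hU : Tinv * U * T = U :=
    exp_neg_smul_mul_mul_exp_smul_of_commute ((Commute.refl U).smul_right I) θ
  have hconj : ∀ (a b : ℂ) (x y : A), Tinv * (a • x + b • y) * T
      = a • (Tinv * x * T) + b • (Tinv * y * T) := fun a b x y => by
    simp only [mul_add, add_mul, mul_smul_comm, smul_mul_assoc]
  have hS₁ : S₁ = c • X + s • U := by
    simp only [X, U]; linear_combination (norm := module) -hcs • S₁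
  have hS₂ : S₂ = s • X + (-c) • U := by
    simp only [X, U]; linear_combination (norm := module) -hcs • S₂
  constructor
  · conv_lhs => rw [hS₁, hconj, hX, hU]
    simp only [X, U]
    match_scalars <;> ring
  · conv_lhs => rw [hS₂, hconj, hX, hU]
    simp only [X, U]
    match_scalars <;> ring

/-- Adjoint action of `T(θ,φ)` on `S₁, S₂` in a complex Banach algebra with
su(2) commutation relations. -/
theorem stmt_4 {A : Type*} [NormedRing A] [NormedAlgebra ℂ A] [CompleteSpace A]
    (S₁ S₂ S₃ : A)
    (h12 : S₁ * S₂ - S₂ * S₁ = Complex.I • S₃)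
    (h23 : S₂ * S₃ - S₃ * S₂ = Complex.I • S₁)
    (h31 : S₃ * S₁ - S₁ * S₃ = Complex.I • S₂)
    (θ φ : ℝ) :
    let Sp : A := S₁ + Complex.I • S₂
    let Sm : A := S₁ - Complex.I • S₂
    let L : A := Complex.exp (Complex.I * φ) • Sm - Complex.exp (-(Complex.I * φ)) • Sp
    let T : A := NormedSpace.exp (((θ : ℂ) / 2) • L)
    let Tinv : A := NormedSpace.exp (-(((θ : ℂ) / 2) • L))
    Tinv * S₁ * T
        = ((((Real.cos θ : ℂ) + 1) / 2)
              + (((Real.cos θ : ℂ) - 1) / 2) * (Real.cos (2 * φ) : ℂ)) • S₁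
          + ((((Real.cos θ : ℂ) - 1) / 2) * (Real.sin (2 * φ) : ℂ)) • S₂
          + ((Real.cos φ : ℂ) * (Real.sin θ : ℂ)) • S₃
    ∧ Tinv * S₂ * T
        = ((((Real.cos θ : ℂ) - 1) / 2) * (Real.sin (2 * φ) : ℂ)) • S₁
          + ((((Real.cos θ : ℂ) + 1) / 2)
              - (((Real.cos θ : ℂ) - 1) / 2) * (Real.cos (2 * φ) : ℂ)) • S₂
          + ((Real.sin θ : ℂ) * (Real.sin φ : ℂ)) • S₃ := by
  intro Sp Sm L T Tinv
  have hL : ((θ : ℂ) / 2) • L = θ • (I • (Complex.sin φ • S₁ - Complex.cos φ • S₂)) := by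
    rw [show L = _ from cexp_smul_sub_sub_cexp_neg_smul_add S₁ S₂ φ, ← Complex.coe_smul]
    match_scalars <;> ring
  have hcs := Complex.cos_sq_add_sin_sq φ
  obtain ⟨hS₁, hS₂⟩ := su2_conj_exp_smul h12 h23 h31 hcs θ
  simp only [Tinv, T, hL, hS₁, hS₂, Complex.ofReal_cos, Complex.ofReal_sin, Complex.ofReal_mul,
    Complex.ofReal_ofNat, Complex.cos_two_mul, Complex.sin_two_mul]
  constructor
  · match_scalars
    · linear_combination hcs
    · ring
    · ring
  · match_scalars
    · ring
    · linear_combination Complex.cos θ * hcs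
    · ring
end

section
/- With the notation of the context, assume in addition that S₁, S₂, S₃ are self-adjoint. Then for all θ, φ ∈ ℝ and k = 1,2,3 the covariant symbol satisfies ⟨ψ_n, S_k ψ_n⟩ = −s·n_k, where n = (n₁,n₂,n₃) = (sinθ cosφ, sinθ sinφ, cosθ); equivalently, for any c ∈ ℝ³, ⟨ψ_n, (c₁S₁ + c₂S₂ + c₃S₃)ψ_n⟩ = −s·(c·n). -/
/-!
The exponent of `T(θ, φ)` equals `θ • (I • C)` with `C = sin φ • S₁ - cos φ • S₂`, so
`t ↦ exp (t • (I • C)) ψ₀` solves `ψ' = I • C ψ`. Along any such curve with `C` symmetric,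
`d/dt ⟪ψ, S ψ⟫ = I * ⟪ψ, ⁅S, C⁆ ψ⟫`. By the su(2) relations, `⟪ψ, C ψ⟫` is conserved, while the
expectations of `W = cos φ • S₁ + sin φ • S₂` and `S₃` satisfy `w' = z`, `z' = -w`: the expectation
vector rotates by the angle `t` about the axis of `C`. At `t = 0` it is `(0, 0, -s)`, because
`⟪ψ₀, ⁅S₃, X⁆ ψ₀⟫ = 0` for every `X` when `ψ₀` is an eigenvector of the self-adjoint `S₃`, and
`S₁`, `S₂` are commutators with `S₃`.
-/

open Complex NormedSpace
open scoped InnerProductSpace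

theorem eq_cos_smul_add_sin_smul_of_hasDerivAt {E : Type*} [NormedAddCommGroup E]
    [NormedSpace ℝ E] {f g : ℝ → E} (hf : ∀ t, HasDerivAt f (g t) t)
    (hg : ∀ t, HasDerivAt g (-f t) t) (t : ℝ) :
    f t = Real.cos t • f 0 + Real.sin t • g 0 ∧ g t = Real.cos t • g 0 - Real.sin t • f 0 := by
  have hF t : HasDerivAt (fun t => Real.cos t • f t - Real.sin t • g t) 0 t :=
    (((Real.hasDerivAt_cos t).fun_smul (hf t)).fun_sub
      ((Real.hasDerivAt_sin t).fun_smul (hg t))).congr_deriv (by module)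
  have hG t : HasDerivAt (fun t => Real.sin t • f t + Real.cos t • g t) 0 t :=
    (((Real.hasDerivAt_sin t).fun_smul (hf t)).fun_add
      ((Real.hasDerivAt_cos t).fun_smul (hg t))).congr_deriv (by module)
  have hF₀ :=
    is_const_of_deriv_eq_zero (fun t => (hF t).differentiableAt) (fun t => (hF t).deriv) t 0
  have hG₀ :=
    is_const_of_deriv_eq_zero (fun t => (hG t).differentiableAt) (fun t => (hG t).deriv) t 0
  simp only [Real.cos_zero, Real.sin_zero, one_smul, zero_smul, sub_zero, zero_add] at hF₀ hG₀
  have hpyth : Real.cos t ^ 2 + Real.sin t ^ 2 = 1 := Real.cos_sq_add_sin_sq t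
  constructor
  · calc f t = (Real.cos t ^ 2 + Real.sin t ^ 2) • f t := by rw [hpyth, one_smul]
      _ = Real.cos t • (Real.cos t • f t - Real.sin t • g t)
          + Real.sin t • (Real.sin t • f t + Real.cos t • g t) := by module
      _ = _ := by rw [hF₀, hG₀]
  · calc g t = (Real.cos t ^ 2 + Real.sin t ^ 2) • g t := by rw [hpyth, one_smul]
      _ = Real.cos t • (Real.sin t • f t + Real.cos t • g t)
          - Real.sin t • (Real.cos t • f t - Real.sin t • g t) := by module
      _ = _ := by rw [hF₀, hG₀]

section Evolution

variable {H : Type*} [NormedAddCommGroup H] [InnerProductSpace ℂ H]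

theorem hasDerivAt_exp_ofReal_smul_apply [CompleteSpace H] (A : H →L[ℂ] H) (ψ : H) (t : ℝ) :
    HasDerivAt (fun t : ℝ => exp ((t : ℂ) • A) ψ) (A (exp ((t : ℂ) • A) ψ)) t := by
  have h := ((hasDerivAt_exp_smul_const' A (t : ℂ)).clm_apply
    (hasDerivAt_const (t : ℂ) ψ)).scomp t ofRealCLM.hasDerivAt
  simpa [Function.comp_def] using h

theorem inner_apply_eq_zero_of_lie_eq_smul {A X Y : H →L[ℂ] H}
    (hA : (A : H →ₗ[ℂ] H).IsSymmetric) {ψ : H} {μ : ℝ} (hψ : A ψ = (μ : ℂ) • ψ) {c : ℂ}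
    (hc : c ≠ 0) (hAX : ⁅A, X⁆ = c • Y) :
    ⟪ψ, Y ψ⟫_ℂ = 0 := by
  have hA' : ⟪A ψ, X ψ⟫_ℂ = ⟪ψ, A (X ψ)⟫_ℂ := hA ψ (X ψ)
  have h : c * ⟪ψ, Y ψ⟫_ℂ = 0 := by
    rw [← inner_smul_right, ← smul_apply, ← hAX, Ring.lie_def, sub_apply, inner_sub_right,
      mul_apply_eq_comp, mul_apply_eq_comp, ← hA', hψ, map_smul, inner_smul_left, inner_smul_right,
      conj_ofReal, sub_self]
  exact (mul_eq_zero.mp h).resolve_left hc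

variable {C : H →L[ℂ] H} (hC : (C : H →ₗ[ℂ] H).IsSymmetric) {P : ℝ → H}
  (hP : ∀ t, HasDerivAt P (I • C (P t)) t)
include hC hP

theorem hasDerivAt_inner_apply_of_hasDerivAt_I_smul (S : H →L[ℂ] H) (t : ℝ) :
    HasDerivAt (fun t => ⟪P t, S (P t)⟫_ℂ) (I * ⟪P t, ⁅S, C⁆ (P t)⟫_ℂ) t := by
  have hSP : HasDerivAt (fun t => S (P t)) (S (I • C (P t))) t := by
    simpa using (hasDerivAt_const t (S.restrictScalars ℝ)).clm_apply (hP t)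
  refine (HasDerivAt.inner ℂ (hP t) hSP).congr_deriv ?_
  have hC' : ⟪C (P t), S (P t)⟫_ℂ = ⟪P t, C (S (P t))⟫_ℂ := hC (P t) (S (P t))
  rw [map_smul, inner_smul_left, inner_smul_right, hC', conj_I,
    Ring.lie_def, sub_apply, inner_sub_right, mul_apply_eq_comp, mul_apply_eq_comp]
  ring

theorem inner_apply_const_of_hasDerivAt_I_smul (t : ℝ) :
    ⟪P t, C (P t)⟫_ℂ = ⟪P 0, C (P 0)⟫_ℂ := by
  have h t : HasDerivAt (fun t => ⟪P t, C (P t)⟫_ℂ) 0 t := by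
    simpa [Ring.lie_def] using hasDerivAt_inner_apply_of_hasDerivAt_I_smul hC hP C t
  exact is_const_of_deriv_eq_zero (fun t => (h t).differentiableAt) (fun t => (h t).deriv) t 0

theorem inner_apply_rotate_of_hasDerivAt_I_smul {W Z : H →L[ℂ] H} (hWC : ⁅W, C⁆ = -(I • Z))
    (hZC : ⁅Z, C⁆ = I • W) (t : ℝ) :
    ⟪P t, W (P t)⟫_ℂ = Real.cos t * ⟪P 0, W (P 0)⟫_ℂ + Real.sin t * ⟪P 0, Z (P 0)⟫_ℂ ∧
    ⟪P t, Z (P t)⟫_ℂ = Real.cos t * ⟪P 0, Z (P 0)⟫_ℂ - Real.sin t * ⟪P 0, W (P 0)⟫_ℂ := by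
  have hW t : HasDerivAt (fun t => ⟪P t, W (P t)⟫_ℂ) ⟪P t, Z (P t)⟫_ℂ t := by
    convert hasDerivAt_inner_apply_of_hasDerivAt_I_smul hC hP W t using 1
    rw [hWC, neg_apply, smul_apply, inner_neg_right, inner_smul_right]
    linear_combination ⟪P t, Z (P t)⟫_ℂ * I_mul_I
  have hZ t : HasDerivAt (fun t => ⟪P t, Z (P t)⟫_ℂ) (-⟪P t, W (P t)⟫_ℂ) t := by
    convert hasDerivAt_inner_apply_of_hasDerivAt_I_smul hC hP Z t using 1
    rw [hZC, smul_apply, inner_smul_right]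
    linear_combination -⟪P t, W (P t)⟫_ℂ * I_mul_I
  simpa only [real_smul] using eq_cos_smul_add_sin_smul_of_hasDerivAt hW hZ t

end Evolution

theorem div_two_smul_exp_smul_sub_sub_exp_neg_smul_add {M : Type*} [AddCommGroup M] [Module ℂ M]
    (A B : M) (θ φ : ℝ) :
    ((θ : ℂ) / 2) • (Complex.exp (I * φ) • (A - I • B) - Complex.exp (-(I * φ)) • (A + I • B))
      = (θ : ℂ) • (I • ((Real.sin φ : ℂ) • A - (Real.cos φ : ℂ) • B)) := by
  have hexp (x : ℝ) : Complex.exp (x * I) = Real.cos x + Real.sin x * I := by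
    rw [exp_mul_I, ← ofReal_cos, ← ofReal_sin]
  rw [mul_comm, ← neg_mul, ← ofReal_neg, hexp, hexp, Real.cos_neg, Real.sin_neg, ofReal_neg]
  match_scalars <;> ring

section Spin

variable {H : Type*} [NormedAddCommGroup H] [InnerProductSpace ℂ H] {S₁ S₂ S₃ : H →L[ℂ] H}

theorem lie_smul_add_smul_smul_sub_smul (h12 : ⁅S₁, S₂⁆ = I • S₃) {u v : ℂ}
    (huv : u ^ 2 + v ^ 2 = 1) : ⁅u • S₁ + v • S₂, v • S₁ - u • S₂⁆ = -(I • S₃) := by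
  rw [Ring.lie_def] at h12 ⊢
  simp only [add_mul, mul_add, sub_mul, mul_sub, smul_mul_assoc, mul_smul_comm]
  linear_combination (norm := module) (-(u ^ 2 + v ^ 2)) • h12 - huv • (I • S₃)

theorem lie_smul_sub_smul (h23 : ⁅S₂, S₃⁆ = I • S₁) (h31 : ⁅S₃, S₁⁆ = I • S₂) (u v : ℂ) :
    ⁅S₃, v • S₁ - u • S₂⁆ = I • (u • S₁ + v • S₂) := by
  rw [Ring.lie_def] at h23 h31 ⊢
  simp only [mul_sub, sub_mul, smul_mul_assoc, mul_smul_comm]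
  linear_combination (norm := module) v • h31 + u • h23

theorem inner_spin_apply_of_hasDerivAt_I_smul (h12 : ⁅S₁, S₂⁆ = I • S₃)
    (h23 : ⁅S₂, S₃⁆ = I • S₁) (h31 : ⁅S₃, S₁⁆ = I • S₂) (hS₁ : (S₁ : H →ₗ[ℂ] H).IsSymmetric)
    (hS₂ : (S₂ : H →ₗ[ℂ] H).IsSymmetric) {φ : ℝ} {P : ℝ → H}
    (hP : ∀ t, HasDerivAt P (I • ((Real.sin φ : ℂ) • S₁ - (Real.cos φ : ℂ) • S₂) (P t)) t)
    (h₁ : ⟪P 0, S₁ (P 0)⟫_ℂ = 0) (h₂ : ⟪P 0, S₂ (P 0)⟫_ℂ = 0) (θ : ℝ) :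
    ⟪P θ, S₁ (P θ)⟫_ℂ = ⟪P 0, S₃ (P 0)⟫_ℂ * (Real.sin θ * Real.cos φ) ∧
    ⟪P θ, S₂ (P θ)⟫_ℂ = ⟪P 0, S₃ (P 0)⟫_ℂ * (Real.sin θ * Real.sin φ) ∧
    ⟪P θ, S₃ (P θ)⟫_ℂ = ⟪P 0, S₃ (P 0)⟫_ℂ * Real.cos θ := by
  have huv : (Real.cos φ : ℂ) ^ 2 + (Real.sin φ : ℂ) ^ 2 = 1 := by
    exact_mod_cast Real.cos_sq_add_sin_sq φ
  set u : ℂ := (Real.cos φ : ℂ)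
  set v : ℂ := (Real.sin φ : ℂ)
  set C := v • S₁ - u • S₂
  set W := u • S₁ + v • S₂
  have hC : (C : H →ₗ[ℂ] H).IsSymmetric :=
    (hS₁.smul (conj_ofReal _)).sub (hS₂.smul (conj_ofReal _))
  have hW₀ : ⟪P 0, W (P 0)⟫_ℂ = 0 := by
    simp only [W, add_apply, smul_apply, inner_add_right, inner_smul_right, h₁, h₂, mul_zero,
      add_zero]
  have hC₀ : ⟪P 0, C (P 0)⟫_ℂ = 0 := by
    simp only [C, sub_apply, smul_apply, inner_sub_right, inner_smul_right, h₁, h₂, mul_zero,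
      sub_zero]
  obtain ⟨hWθ, hS₃θ⟩ : ⟪P θ, W (P θ)⟫_ℂ = _ ∧ _ :=
    inner_apply_rotate_of_hasDerivAt_I_smul hC hP (lie_smul_add_smul_smul_sub_smul h12 huv)
      (lie_smul_sub_smul h23 h31 u v) θ
  have hCθ := inner_apply_const_of_hasDerivAt_I_smul hC hP θ
  rw [hW₀] at hWθ hS₃θ
  rw [hC₀] at hCθ
  have hS₁ : S₁ = u • W + v • C := by linear_combination (norm := module) -(huv • S₁)
  have hS₂ : S₂ = v • W - u • C := by linear_combination (norm := module) -(huv • S₂)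
  refine ⟨?_, ?_, ?_⟩
  · rw [hS₁]
    simp only [add_apply, smul_apply, inner_add_right, inner_smul_right, hWθ, hCθ]
    ring
  · rw [hS₂]
    simp only [sub_apply, smul_apply, inner_sub_right, inner_smul_right, hWθ, hCθ]
    ring
  · rw [hS₃θ]
    ring

end Spin

theorem stmt_11_general {H : Type*} [NormedAddCommGroup H] [InnerProductSpace ℂ H] [CompleteSpace H]
    (S₁ S₂ S₃ : H →L[ℂ] H)
    (h12 : S₁ ∘L S₂ - S₂ ∘L S₁ = Complex.I • S₃)
    (h23 : S₂ ∘L S₃ - S₃ ∘L S₂ = Complex.I • S₁)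
    (h31 : S₃ ∘L S₁ - S₁ ∘L S₃ = Complex.I • S₂)
    (hsa1 : IsSelfAdjoint S₁) (hsa2 : IsSelfAdjoint S₂) (hsa3 : IsSelfAdjoint S₃)
    (s : ℝ)
    (ψ₀ : H) (hψ₀ : ‖ψ₀‖ = 1)
    (hS3ψ₀ : S₃ ψ₀ = -((s : ℂ) • ψ₀))
    (θ φ : ℝ) :
    let T : H →L[ℂ] H :=
      exp (((θ : ℂ) / 2) • (Complex.exp (Complex.I * φ) • (S₁ - Complex.I • S₂)
        - Complex.exp (-(Complex.I * φ)) • (S₁ + Complex.I • S₂)))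
    let ψn : H := T ψ₀
    let n₁ : ℝ := Real.sin θ * Real.cos φ
    let n₂ : ℝ := Real.sin θ * Real.sin φ
    let n₃ : ℝ := Real.cos θ
    ((inner ℂ ψn (S₁ ψn) : ℂ) = (-(s * n₁ : ℝ) : ℂ))
    ∧ ((inner ℂ ψn (S₂ ψn) : ℂ) = (-(s * n₂ : ℝ) : ℂ))
    ∧ ((inner ℂ ψn (S₃ ψn) : ℂ) = (-(s * n₃ : ℝ) : ℂ))
    ∧ (∀ c₁ c₂ c₃ : ℝ,
        (inner ℂ ψn (((c₁ : ℂ) • S₁ + (c₂ : ℂ) • S₂ + (c₃ : ℂ) • S₃) ψn) : ℂ)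
          = (-(s * (c₁ * n₁ + c₂ * n₂ + c₃ * n₃)) : ℝ)) := by
  intro T ψn n₁ n₂ n₃
  set C := (Real.sin φ : ℂ) • S₁ - (Real.cos φ : ℂ) • S₂
  set P : ℝ → H := fun t => exp ((t : ℂ) • (I • C)) ψ₀
  have hψn : ψn = P θ := congrArg (fun A : H →L[ℂ] H => exp A ψ₀)
    (div_two_smul_exp_smul_sub_sub_exp_neg_smul_add S₁ S₂ θ φ)
  have hP₀ : P 0 = ψ₀ := by simp [P]
  have hP t : HasDerivAt P (I • C (P t)) t := hasDerivAt_exp_ofReal_smul_apply (I • C) ψ₀ t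
  have hS₃ψ₀ : S₃ ψ₀ = ((-s : ℝ) : ℂ) • ψ₀ := by rw [hS3ψ₀, ofReal_neg, neg_smul]
  have h32 : ⁅S₃, S₂⁆ = -I • S₁ := by rw [neg_smul, ← h23]; exact (neg_sub _ _).symm
  have h₁ := inner_apply_eq_zero_of_lie_eq_smul hsa3.isSymmetric hS₃ψ₀ (neg_ne_zero.2 I_ne_zero)
    h32
  have h₂ := inner_apply_eq_zero_of_lie_eq_smul hsa3.isSymmetric hS₃ψ₀ I_ne_zero h31
  have h₃ : ⟪ψ₀, S₃ ψ₀⟫_ℂ = -s := by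
    rw [hS₃ψ₀, inner_smul_right, inner_self_eq_norm_sq_to_K, hψ₀]; simp
  obtain ⟨e₁, e₂, e₃⟩ := inner_spin_apply_of_hasDerivAt_I_smul h12 h23 h31 hsa1.isSymmetric
    hsa2.isSymmetric hP (hP₀ ▸ h₁) (hP₀ ▸ h₂) θ
  rw [hP₀, h₃] at e₁ e₂ e₃
  rw [hψn]
  refine ⟨?_, ?_, ?_, fun c₁ c₂ c₃ => ?_⟩
  · rw [e₁]; push_cast [n₁]; ring
  · rw [e₂]; push_cast [n₂]; ring
  · rw [e₃]; push_cast [n₃]; ring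
  · simp only [add_apply, smul_apply, inner_add_right, inner_smul_right, e₁, e₂, e₃]
    push_cast [n₁, n₂, n₃]; ring

/-- The covariant symbol of the spin operators on spin coherent states:
`⟨ψ_n, S_k ψ_n⟩ = −s n_k`. -/
theorem stmt_11 {H : Type*} [NormedAddCommGroup H] [InnerProductSpace ℂ H] [CompleteSpace H]
    (S₁ S₂ S₃ : H →L[ℂ] H)
    (h12 : S₁ ∘L S₂ - S₂ ∘L S₁ = Complex.I • S₃)
    (h23 : S₂ ∘L S₃ - S₃ ∘L S₂ = Complex.I • S₁)
    (h31 : S₃ ∘L S₁ - S₁ ∘L S₃ = Complex.I • S₂)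
    (hsa1 : IsSelfAdjoint S₁) (hsa2 : IsSelfAdjoint S₂) (hsa3 : IsSelfAdjoint S₃)
    (s : ℝ) (hs : 0 < s)
    (ψ₀ : H) (hψ₀ : ‖ψ₀‖ = 1)
    (hS3ψ₀ : S₃ ψ₀ = -((s : ℂ) • ψ₀))
    (hSmψ₀ : (S₁ - Complex.I • S₂) ψ₀ = 0)
    (θ φ : ℝ) :
    let T : H →L[ℂ] H :=
      exp (((θ : ℂ) / 2) • (Complex.exp (Complex.I * φ) • (S₁ - Complex.I • S₂)
        - Complex.exp (-(Complex.I * φ)) • (S₁ + Complex.I • S₂)))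
    let ψn : H := T ψ₀
    let n₁ : ℝ := Real.sin θ * Real.cos φ
    let n₂ : ℝ := Real.sin θ * Real.sin φ
    let n₃ : ℝ := Real.cos θ
    ((inner ℂ ψn (S₁ ψn) : ℂ) = (-(s * n₁ : ℝ) : ℂ))
    ∧ ((inner ℂ ψn (S₂ ψn) : ℂ) = (-(s * n₂ : ℝ) : ℂ))
    ∧ ((inner ℂ ψn (S₃ ψn) : ℂ) = (-(s * n₃ : ℝ) : ℂ))
    ∧ (∀ c₁ c₂ c₃ : ℝ,
        (inner ℂ ψn (((c₁ : ℂ) • S₁ + (c₂ : ℂ) • S₂ + (c₃ : ℂ) • S₃) ψn) : ℂ)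
          = (-(s * (c₁ * n₁ + c₂ * n₂ + c₃ * n₃)) : ℝ)) :=
  stmt_11_general S₁ S₂ S₃ h12 h23 h31 hsa1 hsa2 hsa3 s ψ₀ hψ₀ hS3ψ₀ θ φ
end

section
/- Let d ∈ ℕ, ℏ > 0, and for z = (q,p) ∈ ℝ^d × ℝ^d define the Heisenberg translation of a function f : ℝ^d → ℂ by (T(z)f)(x) = exp((i/ℏ)(p·x − p·q/2))·f(x−q). Let t ↦ z_t = (q_t, p_t) be a continuously differentiable path in ℝ^{2d} and let f be continuously differentiable. Then for every t and every x ∈ ℝ^d, iℏ·(d/dt)[(T(z_t)f)(x)] = ( T(z_t)·g_t )(x), where g_t(y) = (1/2)σ(z_t, ż_t)·f(y) − iℏ·(q̇_t·∇f(y)) − (ṗ_t·y)·f(y) and σ((q,p),(q',p')) = p·q' − q·p' is the standard symplectic form on ℝ^{2d}. -/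
open Complex
open scoped RealInnerProductSpace

/-! Write `T(z)f(x) = e^{(i/ℏ)φ(z,x)} f(x - q)` with phase `φ(z,x) = p·x - p·q/2`. Along a path, the
product rule splits the time derivative into the phase term `(i/ℏ) φ̇ T(z)f(x)` and the transport term
`-T(z)(q̇·∇f)(x)`. Differentiating the phase gives `φ̇ = ṗ·(x - q) - ½σ(z, ż)`, and multiplying by `iℏ`
turns the two terms into `T(z)` applied to the three summands of `g`. -/

noncomputable section

namespace Heisenberg

variable {E : Type*} [NormedAddCommGroup E] [InnerProductSpace ℝ E]

def symplecticForm (z w : E × E) : ℝ := ⟪z.2, w.1⟫ - ⟪z.1, w.2⟫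

def phase (z : E × E) (y : E) : ℝ := ⟪z.2, y⟫ - ⟪z.2, z.1⟫ / 2

def translate (ℏ : ℝ) (z : E × E) (f : E → ℂ) (y : E) : ℂ :=
  exp (I / ℏ * phase z y) * f (y - z.1)

def generator (ℏ : ℝ) (z ż : E × E) (f : E → ℂ) (y : E) : ℂ :=
  ((1 / 2 * symplecticForm z ż : ℝ) : ℂ) * f y - I * ℏ * fderiv ℝ f y ż.1
    - (⟪ż.2, y⟫ : ℂ) * f y

theorem hasDerivAt_phase {q p : ℝ → E} {q' p' : E} {t : ℝ} (hq : HasDerivAt q q' t)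
    (hp : HasDerivAt p p' t) (x : E) :
    HasDerivAt (fun τ => phase (q τ, p τ) x)
      (⟪p', x - q t⟫ - symplecticForm (q t, p t) (q', p') / 2) t := by
  have hpx : HasDerivAt (fun τ => ⟪p τ, x⟫) ⟪p', x⟫ t := by
    simpa using hp.inner ℝ (hasDerivAt_const t x)
  refine (hpx.sub ((hp.inner ℝ hq).div_const 2)).congr_deriv ?_
  simp only [symplecticForm, inner_sub_right, real_inner_comm (q t) p']
  ring

theorem hasDerivAt_translate {ℏ : ℝ} (hℏ : ℏ ≠ 0) {q p : ℝ → E} {q' p' : E} {t : ℝ}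
    (hq : HasDerivAt q q' t) (hp : HasDerivAt p p' t) {f : E → ℂ} {x : E}
    (hf : DifferentiableAt ℝ f (x - q t)) :
    HasDerivAt (fun τ => translate ℏ (q τ, p τ) f x)
      ((I * ℏ)⁻¹ * translate ℏ (q t, p t) (generator ℏ (q t, p t) (q', p') f) x) t := by
  have hexp := (((hasDerivAt_phase hq hp x).ofReal_comp).const_mul (I / ℏ)).cexp
  have hshift : HasDerivAt (fun τ => f (x - q τ)) (fderiv ℝ f (x - q t) (-q')) t :=
    hf.hasFDerivAt.comp_hasDerivAt t ((hasDerivAt_const t x).sub hq |>.congr_deriv (zero_sub q'))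
  refine (hexp.mul hshift).congr_deriv ?_
  have hℏ' : (ℏ : ℂ) ≠ 0 := ofReal_ne_zero.mpr hℏ
  simp only [translate, generator, map_neg]
  push_cast
  field_simp
  linear_combination
    ((⟪p', x - q t⟫ : ℂ) * 2 - symplecticForm (q t, p t) (q', p')) * f (x - q t) * I_sq

end Heisenberg

end

/-- Time derivative of a Heisenberg-translated function along a `C¹` path
`z_t = (q_t, p_t)` in phase space:
`iℏ d/dt (T(z_t)f)(x) = (T(z_t)g_t)(x)` with
`g_t(y) = ½σ(z_t,ż_t) f(y) − iℏ q̇_t·∇f(y) − (ṗ_t·y) f(y)`. -/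
theorem stmt_12 (d : ℕ) (ℏ : ℝ) (hℏ : 0 < ℏ)
    (q p : ℝ → EuclideanSpace ℝ (Fin d)) (hq : ContDiff ℝ 1 q) (hp : ContDiff ℝ 1 p)
    (f : EuclideanSpace ℝ (Fin d) → ℂ) (hf : ContDiff ℝ 1 f)
    (t : ℝ) (x : EuclideanSpace ℝ (Fin d)) :
    let T : EuclideanSpace ℝ (Fin d) × EuclideanSpace ℝ (Fin d) →
        (EuclideanSpace ℝ (Fin d) → ℂ) → EuclideanSpace ℝ (Fin d) → ℂ :=
      fun z g y => Complex.exp ((Complex.I / (ℏ : ℂ)) *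
          Complex.ofReal ((inner ℝ z.2 y : ℝ) - (inner ℝ z.2 z.1 : ℝ) / 2)) * g (y - z.1)
    let σ : (EuclideanSpace ℝ (Fin d) × EuclideanSpace ℝ (Fin d)) →
        (EuclideanSpace ℝ (Fin d) × EuclideanSpace ℝ (Fin d)) → ℝ :=
      fun z w => (inner ℝ z.2 w.1 : ℝ) - (inner ℝ z.1 w.2 : ℝ)
    let g : EuclideanSpace ℝ (Fin d) → ℂ := fun y =>
      Complex.ofReal ((1 / 2) * σ (q t, p t) (deriv q t, deriv p t)) * f y
        - Complex.I * (ℏ : ℂ) * fderiv ℝ f y (deriv q t)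
        - Complex.ofReal ((inner ℝ (deriv p t) y : ℝ)) * f y
    ∃ D : ℂ, HasDerivAt (fun τ => T (q τ, p τ) f x) D t
      ∧ Complex.I * (ℏ : ℂ) * D = T (q t, p t) g x := by
  intro T σ g
  have hℏ' : (ℏ : ℂ) ≠ 0 := ofReal_ne_zero.mpr hℏ.ne'
  have hderiv := Heisenberg.hasDerivAt_translate (f := f) (x := x) hℏ.ne'
    (hq.differentiable one_ne_zero t).hasDerivAt (hp.differentiable one_ne_zero t).hasDerivAt
    (hf.differentiable one_ne_zero _)
  refine ⟨_, hderiv, ?_⟩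
  rw [← mul_assoc, mul_inv_cancel₀ (mul_ne_zero I_ne_zero hℏ'), one_mul]
  rfl
end

section
/- Let ℏ > 0, q₀ ∈ ℝ, r₀ > 0, b ≥ 0, and let F : ℝ² → ℝ be measurable with 0 ≤ F(x,y) ≤ 1 for all (x,y) ∈ ℝ², and F(x,y) ≤ exp(−b(x−y)²) whenever |x − q₀| ≤ r₀ and |y − q₀| ≤ r₀. Then (πℏ)^{−1} · ∫_{ℝ²} exp( −((x−q₀)² + (y−q₀)²)/ℏ )·F(x,y) dx dy ≤ (1 + 2bℏ)^{−1/2} + 4·exp( −r₀²/(2ℏ) ). -/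
open MeasureTheory Real

private lemma gaussAux_integrable {c : ℝ} (hc : 0 < c) (m : ℝ) :
    Integrable (fun x : ℝ => Real.exp (-(c * (x - m) ^ 2))) := by
  have h := (integrable_exp_neg_mul_sq hc).comp_sub_right m
  simpa [neg_mul] using h

private lemma gaussAux_integral (c m : ℝ) :
    ∫ x : ℝ, Real.exp (-(c * (x - m) ^ 2)) = Real.sqrt (Real.pi / c) := by
  calc ∫ x : ℝ, Real.exp (-(c * (x - m) ^ 2))
      = ∫ x : ℝ, Real.exp (-(c * x ^ 2)) :=
        integral_sub_right_eq_self (fun x => Real.exp (-(c * x ^ 2))) m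
    _ = Real.sqrt (Real.pi / c) := by simpa [neg_mul] using integral_gaussian c

private lemma inner_int {a b : ℝ} (ha : 0 < a) (hb : 0 ≤ b) (q₀ x : ℝ) :
    ∫ y : ℝ, Real.exp (-(a * (y - q₀) ^ 2)) * Real.exp (-(b * (x - y) ^ 2))
    = Real.exp (-(a * b / (a + b) * (x - q₀) ^ 2)) * Real.sqrt (Real.pi / (a + b)) := by
  have hab : 0 < a + b := by linarith
  have hfun : ∀ y : ℝ, Real.exp (-(a * (y - q₀) ^ 2)) * Real.exp (-(b * (x - y) ^ 2))
      = Real.exp (-(a * b / (a + b) * (x - q₀) ^ 2)) *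
        Real.exp (-((a + b) * (y - (a * q₀ + b * x) / (a + b)) ^ 2)) := by
    intro y
    rw [← Real.exp_add, ← Real.exp_add]
    congr 1
    field_simp
    ring
  simp_rw [hfun]
  rw [MeasureTheory.integral_const_mul, gaussAux_integral]

private lemma tail_bound {a r₀ : ℝ} (ha : 0 < a) (hr : 0 < r₀) (q₀ : ℝ) :
    ∫ x : ℝ, Set.indicator {x : ℝ | r₀ < |x - q₀|}
        (fun x => Real.exp (-(a * (x - q₀) ^ 2))) x
      ≤ Real.exp (-(a * r₀ ^ 2 / 2)) * Real.sqrt (Real.pi / (a / 2)) := by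
  have h2 : (0:ℝ) < a / 2 := by linarith
  have hset : MeasurableSet {x : ℝ | r₀ < |x - q₀|} := by
    have : Continuous fun x : ℝ => |x - q₀| := by continuity
    exact measurableSet_lt measurable_const this.measurable
  have hint2 : Integrable (fun x : ℝ =>
      Real.exp (-(a * r₀ ^ 2 / 2)) * Real.exp (-(a / 2 * (x - q₀) ^ 2))) :=
    (gaussAux_integrable h2 q₀).const_mul _
  have hint1 : Integrable (fun x : ℝ => Set.indicator {x : ℝ | r₀ < |x - q₀|}
      (fun x => Real.exp (-(a * (x - q₀) ^ 2))) x) :=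
    (gaussAux_integrable ha q₀).indicator hset
  have hmono : ∀ x : ℝ, Set.indicator {x : ℝ | r₀ < |x - q₀|}
      (fun x => Real.exp (-(a * (x - q₀) ^ 2))) x
      ≤ Real.exp (-(a * r₀ ^ 2 / 2)) * Real.exp (-(a / 2 * (x - q₀) ^ 2)) := by
    intro x
    by_cases hx : r₀ < |x - q₀|
    · rw [Set.indicator_of_mem (show x ∈ {x : ℝ | r₀ < |x - q₀|} from hx)]
      rw [← Real.exp_add]
      apply Real.exp_le_exp.2
      have hsq : r₀ ^ 2 ≤ (x - q₀) ^ 2 := by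
        have := sq_abs (x - q₀)
        nlinarith [abs_nonneg (x - q₀)]
      nlinarith
    · rw [Set.indicator_of_notMem (show x ∉ {x : ℝ | r₀ < |x - q₀|} from hx)]
      positivity
  calc ∫ x : ℝ, Set.indicator {x : ℝ | r₀ < |x - q₀|}
        (fun x => Real.exp (-(a * (x - q₀) ^ 2))) x
      ≤ ∫ x : ℝ, Real.exp (-(a * r₀ ^ 2 / 2)) * Real.exp (-(a / 2 * (x - q₀) ^ 2)) :=
        integral_mono hint1 hint2 hmono
    _ = Real.exp (-(a * r₀ ^ 2 / 2)) * Real.sqrt (Real.pi / (a / 2)) := by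
        rw [MeasureTheory.integral_const_mul, gaussAux_integral]


set_option maxHeartbeats 800000 in
/-- Analytic core of the purity estimate: a Gaussian average of a kernel `F`
bounded by `1` everywhere and by `exp(−b(x−y)²)` near `q₀` is at most
`(1+2bℏ)^{−1/2} + 4 exp(−r₀²/(2ℏ))`. -/
theorem stmt_14 (ℏ q₀ r₀ b : ℝ) (hℏ : 0 < ℏ) (hr₀ : 0 < r₀) (hb : 0 ≤ b)
    (F : ℝ × ℝ → ℝ) (hFmeas : Measurable F)
    (hF0 : ∀ xy : ℝ × ℝ, 0 ≤ F xy) (hF1 : ∀ xy : ℝ × ℝ, F xy ≤ 1)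
    (hFb : ∀ x y : ℝ, |x - q₀| ≤ r₀ → |y - q₀| ≤ r₀ →
      F (x, y) ≤ Real.exp (-(b * (x - y) ^ 2))) :
    (Real.pi * ℏ)⁻¹ *
      ∫ xy : ℝ × ℝ,
        Real.exp (-(((xy.1 - q₀) ^ 2 + (xy.2 - q₀) ^ 2) / ℏ)) * F xy
    ≤ (Real.sqrt (1 + 2 * b * ℏ))⁻¹ + 4 * Real.exp (-(r₀ ^ 2 / (2 * ℏ))) := by
  have hπ : (0:ℝ) < Real.pi := Real.pi_pos
  have hℏ' : ℏ ≠ 0 := ne_of_gt hℏ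
  set a : ℝ := ℏ⁻¹ with ha_def
  have ha : 0 < a := inv_pos.2 hℏ
  have ha' : a ≠ 0 := ne_of_gt ha
  have hab : 0 < a + b := by linarith
  set g : ℝ → ℝ := fun x => Real.exp (-(a * (x - q₀) ^ 2)) with hg_def
  have hg_nonneg : ∀ x, 0 ≤ g x := fun x => le_of_lt (Real.exp_pos _)
  have hg_int : Integrable g := gaussAux_integrable ha q₀
  have hg_cont : Continuous g := by
    apply Real.continuous_exp.comp; continuity
  have hset : MeasurableSet {x : ℝ | r₀ < |x - q₀|} := by
    have hc : Continuous fun x : ℝ => |x - q₀| := by continuity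
    exact measurableSet_lt measurable_const hc.measurable
  set ind : ℝ → ℝ := Set.indicator {x : ℝ | r₀ < |x - q₀|} g with hind_def
  have hind_int : Integrable ind := hg_int.indicator hset
  have hind_nonneg : ∀ x, 0 ≤ ind x := fun x =>
    Set.indicator_nonneg (fun y _ => hg_nonneg y) x
  -- rewrite the integrand
  have hGF : (fun xy : ℝ × ℝ =>
      Real.exp (-(((xy.1 - q₀) ^ 2 + (xy.2 - q₀) ^ 2) / ℏ)) * F xy)
      = fun xy : ℝ × ℝ => g xy.1 * g xy.2 * F xy := by
    funext p
    have : Real.exp (-(((p.1 - q₀) ^ 2 + (p.2 - q₀) ^ 2) / ℏ)) = g p.1 * g p.2 := by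
      rw [hg_def]; rw [← Real.exp_add]; congr 1; rw [ha_def, div_eq_mul_inv]; ring
    rw [this]
  rw [hGF]
  -- the three comparison functions
  set H : ℝ × ℝ → ℝ := fun p => g p.1 * g p.2 * Real.exp (-(b * (p.1 - p.2) ^ 2))
    with hH_def
  have hG_int : Integrable (fun p : ℝ × ℝ => g p.1 * g p.2) := hg_int.mul_prod hg_int
  have hG_cont : Continuous (fun p : ℝ × ℝ => g p.1 * g p.2) :=
    (hg_cont.comp continuous_fst).mul (hg_cont.comp continuous_snd)
  have hGF_int : Integrable (fun p : ℝ × ℝ => g p.1 * g p.2 * F p) := by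
    apply hG_int.mono' ((hG_cont.measurable.mul hFmeas).aestronglyMeasurable)
    filter_upwards with p
    rw [Real.norm_eq_abs, abs_of_nonneg (by
      exact mul_nonneg (mul_nonneg (hg_nonneg _) (hg_nonneg _)) (hF0 p))]
    calc g p.1 * g p.2 * F p ≤ g p.1 * g p.2 * 1 :=
          mul_le_mul_of_nonneg_left (hF1 p) (mul_nonneg (hg_nonneg _) (hg_nonneg _))
      _ = g p.1 * g p.2 := mul_one _
  have hH_int : Integrable H := by
    apply hG_int.mono' (by
      apply Continuous.aestronglyMeasurable
      apply hG_cont.mul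
      apply Real.continuous_exp.comp
      continuity)
    filter_upwards with p
    rw [Real.norm_eq_abs, abs_of_nonneg (by positivity)]
    have he : Real.exp (-(b * (p.1 - p.2) ^ 2)) ≤ 1 :=
      Real.exp_le_one_iff.2 (neg_nonpos.2 (by positivity))
    calc g p.1 * g p.2 * Real.exp (-(b * (p.1 - p.2) ^ 2)) ≤ g p.1 * g p.2 * 1 :=
          mul_le_mul_of_nonneg_left he (mul_nonneg (hg_nonneg _) (hg_nonneg _))
      _ = g p.1 * g p.2 := mul_one _
  have hA_int : Integrable (fun p : ℝ × ℝ => ind p.1 * g p.2) := hind_int.mul_prod hg_int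
  have hB_int : Integrable (fun p : ℝ × ℝ => g p.1 * ind p.2) := hg_int.mul_prod hind_int
  -- pointwise bound
  have hpt : ∀ p : ℝ × ℝ, g p.1 * g p.2 * F p
      ≤ H p + (ind p.1 * g p.2 + g p.1 * ind p.2) := by
    intro p
    have hGnn : 0 ≤ g p.1 * g p.2 := mul_nonneg (hg_nonneg _) (hg_nonneg _)
    by_cases h1 : |p.1 - q₀| ≤ r₀
    · by_cases h2 : |p.2 - q₀| ≤ r₀
      · have : g p.1 * g p.2 * F p ≤ H p := by
          rw [hH_def]
          exact mul_le_mul_of_nonneg_left (by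
            simpa using hFb p.1 p.2 h1 h2) hGnn
        have h3 : 0 ≤ ind p.1 * g p.2 + g p.1 * ind p.2 := by
          have := hind_nonneg p.1; have := hind_nonneg p.2
          have := hg_nonneg p.1; have := hg_nonneg p.2
          positivity
        linarith
      · have hm : p.2 ∈ {x : ℝ | r₀ < |x - q₀|} := lt_of_not_ge h2
        have hie : ind p.2 = g p.2 := Set.indicator_of_mem hm g
        have h4 : g p.1 * g p.2 * F p ≤ g p.1 * ind p.2 := by
          rw [hie]
          calc g p.1 * g p.2 * F p ≤ g p.1 * g p.2 * 1 :=
                mul_le_mul_of_nonneg_left (hF1 p) hGnn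
            _ = g p.1 * g p.2 := mul_one _
        have h5 : 0 ≤ H p := by
          rw [hH_def]; positivity
        have h6 : 0 ≤ ind p.1 * g p.2 := mul_nonneg (hind_nonneg _) (hg_nonneg _)
        linarith
    · have hm : p.1 ∈ {x : ℝ | r₀ < |x - q₀|} := lt_of_not_ge h1
      have hie : ind p.1 = g p.1 := Set.indicator_of_mem hm g
      have h4 : g p.1 * g p.2 * F p ≤ ind p.1 * g p.2 := by
        rw [hie]
        calc g p.1 * g p.2 * F p ≤ g p.1 * g p.2 * 1 :=
              mul_le_mul_of_nonneg_left (hF1 p) hGnn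
          _ = g p.1 * g p.2 := mul_one _
      have h5 : 0 ≤ H p := by rw [hH_def]; positivity
      have h6 : 0 ≤ g p.1 * ind p.2 := mul_nonneg (hg_nonneg _) (hind_nonneg _)
      linarith
  -- integrate the pointwise bound
  have hIle : (∫ p : ℝ × ℝ, g p.1 * g p.2 * F p)
      ≤ (∫ p : ℝ × ℝ, H p) + ((∫ p : ℝ × ℝ, ind p.1 * g p.2)
        + (∫ p : ℝ × ℝ, g p.1 * ind p.2)) := by
    have h1 : (∫ p : ℝ × ℝ, g p.1 * g p.2 * F p)
        ≤ ∫ p : ℝ × ℝ, H p + (ind p.1 * g p.2 + g p.1 * ind p.2) :=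
      integral_mono hGF_int (hH_int.add (hA_int.add hB_int)) hpt
    rwa [integral_add hH_int ((hA_int.add hB_int) :
        Integrable fun p : ℝ × ℝ => ind p.1 * g p.2 + g p.1 * ind p.2),
      integral_add hA_int hB_int] at h1
  -- compute ∫ H via Fubini and completing the square
  set c2 : ℝ := a + a * b / (a + b) with hc2_def
  have hc2 : 0 < c2 := by
    rw [hc2_def]
    have : 0 ≤ a * b / (a + b) := by positivity
    linarith
  have hHval : (∫ p : ℝ × ℝ, H p)
      = Real.sqrt (Real.pi / (a + b)) * Real.sqrt (Real.pi / c2) := by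
    have hfub : (∫ p : ℝ × ℝ, H p) = ∫ x : ℝ, ∫ y : ℝ, H (x, y) :=
      MeasureTheory.integral_prod H hH_int
    rw [hfub]
    have hinner : ∀ x : ℝ, (∫ y : ℝ, H (x, y))
        = Real.sqrt (Real.pi / (a + b)) * Real.exp (-(c2 * (x - q₀) ^ 2)) := by
      intro x
      have h1 : (∫ y : ℝ, H (x, y))
          = g x * ∫ y : ℝ, g y * Real.exp (-(b * (x - y) ^ 2)) := by
        rw [← MeasureTheory.integral_const_mul]
        congr 1; funext y; rw [hH_def]; ring
      rw [h1, inner_int ha hb q₀ x]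
      rw [hg_def]
      rw [show Real.exp (-(a * (x - q₀) ^ 2)) *
          (Real.exp (-(a * b / (a + b) * (x - q₀) ^ 2)) * Real.sqrt (Real.pi / (a + b)))
          = Real.sqrt (Real.pi / (a + b)) *
            (Real.exp (-(a * (x - q₀) ^ 2)) * Real.exp (-(a * b / (a + b) * (x - q₀) ^ 2)))
          from by ring]
      congr 1
      rw [← Real.exp_add]
      congr 1
      rw [hc2_def]; ring
    simp_rw [hinner]
    rw [MeasureTheory.integral_const_mul, gaussAux_integral]
  -- value of the main term
  have hmain : (Real.pi * ℏ)⁻¹ * (∫ p : ℝ × ℝ, H p) = (Real.sqrt (1 + 2 * b * ℏ))⁻¹ := by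
    rw [hHval]
    rw [← Real.sqrt_mul (by positivity) (Real.pi / c2)]
    have hpos1 : (0:ℝ) < 1 + 2 * b * ℏ := by positivity
    have hkey : (a + b) * c2 = a * (a + 2 * b) := by
      rw [hc2_def]; field_simp; ring
    have h2 : a * (a + 2 * b) = (1 + 2 * b * ℏ) / ℏ ^ 2 := by
      rw [eq_div_iff (pow_ne_zero 2 hℏ'), ha_def]
      field_simp
    have harg : Real.pi / (a + b) * (Real.pi / c2)
        = (Real.pi * ℏ) ^ 2 / (1 + 2 * b * ℏ) := by
      rw [div_mul_div_comm, hkey, h2, div_div_eq_mul_div]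
      ring
    rw [harg]
    have hpos : (0:ℝ) < 1 + 2 * b * ℏ := by positivity
    have hπℏ : (0:ℝ) < Real.pi * ℏ := by positivity
    rw [Real.sqrt_div (sq_nonneg (Real.pi * ℏ)), Real.sqrt_sq hπℏ.le]
    rw [div_eq_mul_inv, ← mul_assoc, inv_mul_cancel₀ (ne_of_gt hπℏ), one_mul]
  -- tail bounds
  have hπℏ : (0:ℝ) < Real.pi * ℏ := by positivity
  have hAval : (∫ p : ℝ × ℝ, ind p.1 * g p.2) = (∫ x, ind x) * ∫ x, g x :=
    MeasureTheory.integral_prod_mul ind g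
  have hBval : (∫ p : ℝ × ℝ, g p.1 * ind p.2) = (∫ x, g x) * ∫ x, ind x :=
    MeasureTheory.integral_prod_mul g ind
  have hgval : (∫ x, g x) = Real.sqrt (Real.pi / a) := gaussAux_integral a q₀
  have hind_bd : (∫ x, ind x)
      ≤ Real.exp (-(a * r₀ ^ 2 / 2)) * Real.sqrt (Real.pi / (a / 2)) :=
    tail_bound ha hr₀ q₀
  set E : ℝ := Real.exp (-(r₀ ^ 2 / (2 * ℏ))) with hE_def
  have hE_pos : 0 < E := Real.exp_pos _
  have hEeq : Real.exp (-(a * r₀ ^ 2 / 2)) = E := by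
    rw [hE_def]; congr 1; rw [ha_def]; field_simp
  have hsq2 : Real.sqrt (Real.pi / (a / 2)) * Real.sqrt (Real.pi / a)
      = Real.sqrt 2 * (Real.pi * ℏ) := by
    rw [← Real.sqrt_mul (by positivity)]
    have harg2 : Real.pi / (a / 2) * (Real.pi / a) = 2 * (Real.pi * ℏ) ^ 2 := by
      rw [ha_def]; field_simp
    rw [harg2, Real.sqrt_mul (by norm_num : (0:ℝ) ≤ 2), Real.sqrt_sq hπℏ.le]
  have htail : (∫ x, ind x) * (∫ x, g x) ≤ E * (Real.sqrt 2 * (Real.pi * ℏ)) := by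
    rw [hgval]
    calc (∫ x, ind x) * Real.sqrt (Real.pi / a)
        ≤ (Real.exp (-(a * r₀ ^ 2 / 2)) * Real.sqrt (Real.pi / (a / 2)))
            * Real.sqrt (Real.pi / a) :=
          mul_le_mul_of_nonneg_right hind_bd (Real.sqrt_nonneg _)
      _ = E * (Real.sqrt (Real.pi / (a / 2)) * Real.sqrt (Real.pi / a)) := by
          rw [hEeq]; ring
      _ = E * (Real.sqrt 2 * (Real.pi * ℏ)) := by rw [hsq2]
  have step3 : (Real.pi * ℏ)⁻¹ *
      ((∫ p : ℝ × ℝ, ind p.1 * g p.2) + (∫ p : ℝ × ℝ, g p.1 * ind p.2)) ≤ 4 * E := by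
    rw [hAval, hBval]
    have h2s : (∫ x, ind x) * (∫ x, g x) + (∫ x, g x) * (∫ x, ind x)
        = 2 * ((∫ x, ind x) * (∫ x, g x)) := by ring
    rw [h2s]
    have hlin : 2 * ((∫ x, ind x) * (∫ x, g x))
        ≤ 2 * (E * (Real.sqrt 2 * (Real.pi * ℏ))) := by linarith
    calc (Real.pi * ℏ)⁻¹ * (2 * ((∫ x, ind x) * (∫ x, g x)))
        ≤ (Real.pi * ℏ)⁻¹ * (2 * (E * (Real.sqrt 2 * (Real.pi * ℏ)))) :=
          mul_le_mul_of_nonneg_left hlin (inv_nonneg.2 hπℏ.le)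
      _ = 2 * Real.sqrt 2 * E := by field_simp
      _ ≤ 4 * E := by
          have h2 : Real.sqrt 2 ≤ 2 := by
            nlinarith [Real.sq_sqrt (show (0:ℝ) ≤ 2 by norm_num), Real.sqrt_nonneg 2]
          nlinarith
  have step1 : (Real.pi * ℏ)⁻¹ * (∫ p : ℝ × ℝ, g p.1 * g p.2 * F p)
      ≤ (Real.pi * ℏ)⁻¹ * ((∫ p : ℝ × ℝ, H p)
        + ((∫ p : ℝ × ℝ, ind p.1 * g p.2) + (∫ p : ℝ × ℝ, g p.1 * ind p.2))) :=
    mul_le_mul_of_nonneg_left hIle (inv_nonneg.2 hπℏ.le)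
  have step2 : (Real.pi * ℏ)⁻¹ * ((∫ p : ℝ × ℝ, H p)
        + ((∫ p : ℝ × ℝ, ind p.1 * g p.2) + (∫ p : ℝ × ℝ, g p.1 * ind p.2)))
      = (Real.pi * ℏ)⁻¹ * (∫ p : ℝ × ℝ, H p)
        + (Real.pi * ℏ)⁻¹ * ((∫ p : ℝ × ℝ, ind p.1 * g p.2)
          + (∫ p : ℝ × ℝ, g p.1 * ind p.2)) := by ring
  linarith [step1, step2 ▸ step1, hmain, step3]
end

section
/- With the notation of the context, assume in addition that S₁, S₂, S₃ are self-adjoint. Let C = (C₁,C₂,C₃) : ℝ → ℝ³ be continuous and let t ↦ (θ_t, φ_t) be a continuously differentiable path with θ_t ∈ (0,π) such that n(t) = (sinθ_t cosφ_t, sinθ_t sinφ_t, cosθ_t) solves the Landau–Lifshitz equation ṅ(t) = C(t) × n(t). Then there exists a continuously differentiable function α : ℝ → ℝ with α(0) = 0 such that Ψ(t) = e^{i s α(t)}·T(θ_t,φ_t)ψ₀ satisfies the Schrödinger equation i·Ψ̇(t) = ( C₁(t)S₁ + C₂(t)S₂ + C₃(t)S₃ )·Ψ(t) with Ψ(0)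 = ψ_{n(0)}. In particular the exact evolution of a spin coherent state under a purely time-dependent field remains, up to a phase, a spin coherent state propagated along the Landau–Lifshitz flow. -/
/-!
Put `Xₖ = -i Sₖ`. These satisfy the `so(3)` relations `[X₁, X₂] = X₃` (and cyclically), so
conjugation by `exp (z X₃)` rotates `(X₁, X₂)` by the angle `z`; in particular
`T(θ, φ) = exp (φ X₃) exp (θ X₂) exp (-φ X₃)`. As `ψ₀` is an eigenvector of `X₃`, the ansatz is
`Ψ(t) = exp (φ X₃) exp (θ X₂) exp ((α - φ) X₃) ψ₀`. An operator `exp (φ X₃) exp (θ X₂) exp (γ X₃)`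
solves `Ẇ = (C · X) W` as soon as the Euler angles `(φ, θ, γ)` obey Euler's kinematic equations
for the angular velocity `C`. For `θ` and `φ` these equations are the Landau–Lifshitz equation
(divided by `sin θ ≠ 0`); the one for `γ` is solved by `α' = φ' (1 - cos θ) + C · n`.
-/

open NormedSpace
open Complex (I cos sin)

structure IsSo3Triple {A : Type*} [Ring A] (X₁ X₂ X₃ : A) : Prop where
  lie₁₂ : X₁ * X₂ - X₂ * X₁ = X₃
  lie₂₃ : X₂ * X₃ - X₃ * X₂ = X₁
  lie₃₁ : X₃ * X₁ - X₁ * X₃ = X₂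

theorem IsSo3Triple.rotate {A : Type*} [Ring A] {X₁ X₂ X₃ : A} (t : IsSo3Triple X₁ X₂ X₃) :
    IsSo3Triple X₂ X₃ X₁ :=
  ⟨t.lie₂₃, t.lie₃₁, t.lie₁₂⟩

theorem isSo3Triple_neg_I_smul {A : Type*} [Ring A] [Algebra ℂ A] {S₁ S₂ S₃ : A}
    (h₁₂ : S₁ * S₂ - S₂ * S₁ = I • S₃) (h₂₃ : S₂ * S₃ - S₃ * S₂ = I • S₁)
    (h₃₁ : S₃ * S₁ - S₁ * S₃ = I • S₂) :
    IsSo3Triple ((-I) • S₁) ((-I) • S₂) ((-I) • S₃) := by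
  have key {P Q R : A} (h : P * Q - Q * P = I • R) :
      (-I) • P * ((-I) • Q) - (-I) • Q * ((-I) • P) = (-I) • R := by
    rw [smul_mul_smul_comm, smul_mul_smul_comm, ← smul_sub, h, smul_smul]
    congr 1
    linear_combination I * Complex.I_sq
  exact ⟨key h₁₂, key h₂₃, key h₃₁⟩

section BanachAlgebra

variable {𝔸 : Type*} [NormedRing 𝔸] [NormedAlgebra ℂ 𝔸] [CompleteSpace 𝔸]

theorem exp_smul_mul_exp_smul (X : 𝔸) (a b : ℂ) :
    exp (a • X) * exp (b • X) = exp ((a + b) • X) := by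
  let : NormedAlgebra ℚ 𝔸 := NormedAlgebra.restrictScalars ℚ ℂ 𝔸
  rw [add_smul, exp_add_of_commute (((Commute.refl X).smul_left a).smul_right b)]

theorem HasDerivAt.exp_ofReal_smul {f : ℝ → ℝ} {f' t : ℝ} (hf : HasDerivAt f f' t) (X : 𝔸) :
    HasDerivAt (fun τ => NormedSpace.exp ((f τ : ℂ) • X))
      ((f' : ℂ) • (NormedSpace.exp ((f t : ℂ) • X) * X)) t := by
  have h := hasDerivAt_exp_smul_const X (f t : ℂ)
  exact h.scomp t hf.ofReal_comp

theorem mul_exp_smul_of_commutator_eq {X B C : 𝔸} (hB : X * B - B * X = C)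
    (hC : X * C - C * X = -B) (z : ℂ) :
    B * exp (z • X) = exp (z • X) * (cos z • B - sin z • C) := by
  set M : ℂ → 𝔸 := fun w => cos w • B - sin w • C
  have hM (w : ℂ) : HasDerivAt M (-sin w • B - cos w • C) w :=
    ((Complex.hasDerivAt_cos w).smul_const B).sub ((Complex.hasDerivAt_sin w).smul_const C)
  have hF (w : ℂ) : HasDerivAt (fun w => exp (w • X) * M w * exp (w • -X)) 0 w := by
    have hXE : X * exp (w • X) = exp (w • X) * X := ((Commute.refl X).smul_right w).exp_right.eq
    have hbracket : X * M w + (-sin w • B - cos w • C) - M w * X = 0 := by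
      simp only [M, mul_sub, sub_mul, mul_smul_comm, smul_mul_assoc]
      linear_combination (norm := module) cos w • hB - sin w • hC
    refine (hasDerivAt_exp_smul_const' X w).mul (hM w) |>.mul
      (hasDerivAt_exp_smul_const' (-X) w) |>.congr_deriv ?_
    calc _ = exp (w • X) * (X * M w + (-sin w • B - cos w • C) - M w * X)
          * exp (w • -X) := by rw [Pi.mul_apply, hXE]; noncomm_ring
      _ = 0 := by rw [hbracket, mul_zero, zero_mul]
  have hconj : exp (z • X) * M z * exp (z • -X) = B := by
    simpa [M] using is_const_of_deriv_eq_zero (fun w => (hF w).differentiableAt)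
      (fun w => (hF w).deriv) z 0
  calc B * exp (z • X) = exp (z • X) * M z * (exp ((-z) • X) * exp (z • X)) := by
        rw [neg_smul, ← smul_neg, ← mul_assoc, hconj]
    _ = exp (z • X) * M z := by
        rw [exp_smul_mul_exp_smul, neg_add_cancel, zero_smul, exp_zero, mul_one]

namespace IsSo3Triple

variable {X₁ X₂ X₃ : 𝔸}

theorem mul_exp_smul (t : IsSo3Triple X₁ X₂ X₃) (c₁ c₂ c₃ z : ℂ) :
    (c₁ • X₁ + c₂ • X₂ + c₃ • X₃) * exp (z • X₃) = exp (z • X₃) *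
      ((c₁ * cos z + c₂ * sin z) • X₁
        + (c₂ * cos z - c₁ * sin z) • X₂ + c₃ • X₃) := by
  have h₁ := mul_exp_smul_of_commutator_eq t.lie₃₁ (by rw [← t.lie₂₃]; abel) z
  have h₂ := mul_exp_smul_of_commutator_eq (X := X₃) (B := X₂) (C := -X₁)
    (by rw [← t.lie₂₃]; abel) (by rw [mul_neg, neg_mul, ← t.lie₃₁]; abel) z
  have h₃ : X₃ * exp (z • X₃) = exp (z • X₃) * X₃ := ((Commute.refl X₃).smul_right z).exp_right.eq
  simp only [add_mul, smul_mul_assoc, h₁, h₂, h₃]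
  simp only [mul_add, mul_sub, mul_neg, mul_smul_comm]
  module

theorem mul_exp_smul_mul_exp_smul (t : IsSo3Triple X₁ X₂ X₃) (c₁ c₂ c₃ φ θ : ℂ) :
    (c₁ • X₁ + c₂ • X₂ + c₃ • X₃) * (exp (φ • X₃) * exp (θ • X₂)) =
      exp (φ • X₃) * exp (θ • X₂) *
        (((c₁ * cos φ + c₂ * sin φ) * cos θ - c₃ * sin θ) • X₁
          + (c₂ * cos φ - c₁ * sin φ) • X₂
          + (c₃ * cos θ + (c₁ * cos φ + c₂ * sin φ) * sin θ) • X₃) := by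
  set a := c₁ * cos φ + c₂ * sin φ
  set b := c₂ * cos φ - c₁ * sin φ
  rw [← mul_assoc, t.mul_exp_smul, mul_assoc, mul_assoc,
    show a • X₁ + b • X₂ + c₃ • X₃ = c₃ • X₃ + a • X₁ + b • X₂ by abel,
    t.rotate.rotate.mul_exp_smul]
  congr 2
  abel

-- `h₁`, `h₂`, `h₃` are Euler's kinematic equations for the angles `(φ, θ, γ)` of the rotation
-- `exp (φ X₃) exp (θ X₂) exp (γ X₃)` and the angular velocity `c`.
theorem hasDerivAt_exp_mul_exp_mul_exp (t : IsSo3Triple X₁ X₂ X₃) {φ θ γ : ℝ → ℝ}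
    {φ' θ' γ' c₁ c₂ c₃ τ : ℝ} (hφ : HasDerivAt φ φ' τ) (hθ : HasDerivAt θ θ' τ)
    (hγ : HasDerivAt γ γ' τ)
    (h₁ : φ' * Real.sin (θ τ) = c₃ * Real.sin (θ τ)
      - (c₁ * Real.cos (φ τ) + c₂ * Real.sin (φ τ)) * Real.cos (θ τ))
    (h₂ : θ' = c₂ * Real.cos (φ τ) - c₁ * Real.sin (φ τ))
    (h₃ : γ' = c₃ * Real.cos (θ τ) + (c₁ * Real.cos (φ τ) + c₂ * Real.sin (φ τ)) * Real.sin (θ τ)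
      - φ' * Real.cos (θ τ)) :
    HasDerivAt (fun τ => exp ((φ τ : ℂ) • X₃) * exp ((θ τ : ℂ) • X₂) * exp ((γ τ : ℂ) • X₃))
      (((c₁ : ℂ) • X₁ + (c₂ : ℂ) • X₂ + (c₃ : ℂ) • X₃) *
        (exp ((φ τ : ℂ) • X₃) * exp ((θ τ : ℂ) • X₂) * exp ((γ τ : ℂ) • X₃))) τ := by
  have hX₃V : X₃ * (exp ((θ τ : ℂ) • X₂) * exp ((γ τ : ℂ) • X₃)) = exp ((θ τ : ℂ) • X₂) *
      (((Real.cos (θ τ) : ℂ) • X₃ - (Real.sin (θ τ) : ℂ) • X₁) * exp ((γ τ : ℂ) • X₃)) := by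
    rw [← mul_assoc, mul_exp_smul_of_commutator_eq t.lie₂₃ (by rw [← t.lie₁₂]; abel),
      Complex.ofReal_cos, Complex.ofReal_sin, mul_assoc]
  have hX₃E : exp ((γ τ : ℂ) • X₃) * X₃ = X₃ * exp ((γ τ : ℂ) • X₃) :=
    ((Commute.refl X₃).smul_right _).exp_right.eq.symm
  have h₁ℂ : (φ' : ℂ) * sin (θ τ) = c₃ * sin (θ τ)
      - (c₁ * cos (φ τ) + c₂ * sin (φ τ)) * cos (θ τ) := by
    exact_mod_cast h₁
  refine ((hφ.exp_ofReal_smul X₃).mul (hθ.exp_ofReal_smul X₂)).mul (hγ.exp_ofReal_smul X₃)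
    |>.congr_deriv ?_
  rw [← mul_assoc, t.mul_exp_smul_mul_exp_smul]
  subst h₂ h₃
  simp only [Pi.mul_apply, smul_mul_assoc, mul_smul_comm, mul_assoc, hX₃E, hX₃V, mul_add, add_mul,
    mul_sub, sub_mul]
  push_cast
  set U := exp ((φ τ : ℂ) • X₃)
  set V := exp ((θ τ : ℂ) • X₂)
  set E := exp ((γ τ : ℂ) • X₃)
  linear_combination (norm := module) -(h₁ℂ • (U * (V * (X₁ * E))))

theorem exp_ladder_eq_exp_mul_exp_mul_exp {S₁ S₂ S₃ : 𝔸}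
    (t : IsSo3Triple ((-I) • S₁) ((-I) • S₂) ((-I) • S₃)) (ϑ ϕ : ℂ) :
    exp ((ϑ / 2) • (Complex.exp (I * ϕ) • (S₁ - I • S₂) - Complex.exp (-(I * ϕ)) • (S₁ + I • S₂)))
      = exp (ϕ • (-I) • S₃) * exp (ϑ • (-I) • S₂) * exp ((-ϕ) • (-I) • S₃) := by
  have hinv₁ : exp (ϕ • (-I) • S₃) * exp ((-ϕ) • (-I) • S₃) = 1 := by
    rw [exp_smul_mul_exp_smul, add_neg_cancel, zero_smul, exp_zero]
  have hinv₂ : exp ((-ϕ) • (-I) • S₃) * exp (ϕ • (-I) • S₃) = 1 := by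
    rw [exp_smul_mul_exp_smul, neg_add_cancel, zero_smul, exp_zero]
  have hconj : exp (ϕ • (-I) • S₃) * ((-I) • S₂) * exp ((-ϕ) • (-I) • S₃)
      = cos ϕ • ((-I) • S₂) - sin ϕ • ((-I) • S₁) := by
    have h := t.mul_exp_smul 0 1 0 (-ϕ)
    simp only [zero_smul, one_smul, zero_add, add_zero, zero_mul, one_mul, Complex.cos_neg,
      Complex.sin_neg] at h
    rw [mul_assoc, h, ← mul_assoc, hinv₁, one_mul]
    module
  have hgen :
      (ϑ / 2) • (Complex.exp (I * ϕ) • (S₁ - I • S₂) - Complex.exp (-(I * ϕ)) • (S₁ + I • S₂))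
        = exp (ϕ • (-I) • S₃) * (ϑ • (-I) • S₂) * exp ((-ϕ) • (-I) • S₃) := by
    rw [mul_smul_comm, smul_mul_assoc, hconj, mul_comm I, ← neg_mul, Complex.exp_mul_I,
      Complex.exp_mul_I, Complex.cos_neg, Complex.sin_neg]
    match_scalars <;> ring_nf
  let : NormedAlgebra ℚ 𝔸 := NormedAlgebra.restrictScalars ℚ ℂ 𝔸
  rw [hgen]
  exact exp_units_conj ⟨_, _, hinv₁, hinv₂⟩ _

end IsSo3Triple

end BanachAlgebra

section Vector

variable {E : Type*} [NormedAddCommGroup E] [NormedSpace ℂ E]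

theorem HasDerivAt.clm_apply_const {G : ℝ → E →L[ℂ] E} {G' : E →L[ℂ] E} {τ : ℝ}
    (hG : HasDerivAt G G' τ) (x : E) : HasDerivAt (fun τ => G τ x) (G' x) τ :=
  ((ContinuousLinearMap.apply ℂ E x).restrictScalars ℝ).hasFDerivAt.comp_hasDerivAt τ hG

variable [CompleteSpace E]

theorem ContinuousLinearMap.exp_apply_of_apply_eq_smul {A : E →L[ℂ] E} {c : ℂ} {x : E}
    (h : A x = c • x) : exp A x = Complex.exp c • x := by
  have hpow (n : ℕ) : (A ^ n) x = c ^ n • x := by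
    induction n with
    | zero => simp
    | succ n ih => rw [pow_succ', mul_apply_eq_comp, ih, map_smul, h, smul_smul, pow_succ]
  have hA := (exp_series_hasSum_exp' (𝕂 := ℂ) A).mapL (ContinuousLinearMap.apply ℂ E x)
  simp only [ContinuousLinearMap.apply_apply, smul_apply, hpow, smul_smul] at hA
  rw [Complex.exp_eq_exp_ℂ]
  simpa [smul_eq_mul] using hA.unique ((exp_series_hasSum_exp' (𝕂 := ℂ) c).smul_const x)

theorem IsSo3Triple.smul_exp_ladder_apply {S₁ S₂ S₃ : E →L[ℂ] E}
    (t : IsSo3Triple ((-I) • S₁) ((-I) • S₂) ((-I) • S₃)) {s : ℝ} {ψ₀ : E}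
    (hψ₀ : S₃ ψ₀ = -((s : ℂ) • ψ₀)) (ϑ ϕ a : ℝ) :
    Complex.exp (I * s * a) • exp (((ϑ : ℂ) / 2) • (Complex.exp (I * ϕ) • (S₁ - I • S₂)
        - Complex.exp (-(I * ϕ)) • (S₁ + I • S₂))) ψ₀ =
      (exp ((ϕ : ℂ) • (-I) • S₃) * exp ((ϑ : ℂ) • (-I) • S₂)
        * exp (((a - ϕ : ℝ) : ℂ) • (-I) • S₃)) ψ₀ := by
  have heig : exp ((a : ℂ) • (-I) • S₃) ψ₀ = Complex.exp (I * s * a) • ψ₀ :=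
    ContinuousLinearMap.exp_apply_of_apply_eq_smul (by rw [smul_apply, smul_apply, hψ₀]; module)
  rw [show ((a - ϕ : ℝ) : ℂ) = -(ϕ : ℂ) + a by push_cast; ring, ← exp_smul_mul_exp_smul ((-I) • S₃),
    ← mul_assoc, mul_apply_eq_comp, heig, map_smul,
    t.exp_ladder_eq_exp_mul_exp_mul_exp (S₁ := S₁) (S₂ := S₂) ϑ ϕ]

end Vector

theorem euler_angles_of_landauLifshitz {θ φ : ℝ → ℝ} {θ' φ' c₁ c₂ c₃ t : ℝ}
    (hθ : HasDerivAt θ θ' t) (hφ : HasDerivAt φ φ' t) (hsin : Real.sin (θ t) ≠ 0)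
    (hn₁ : HasDerivAt (fun τ => Real.sin (θ τ) * Real.cos (φ τ))
      (c₂ * Real.cos (θ t) - c₃ * (Real.sin (θ t) * Real.sin (φ t))) t)
    (hn₂ : HasDerivAt (fun τ => Real.sin (θ τ) * Real.sin (φ τ))
      (c₃ * (Real.sin (θ t) * Real.cos (φ t)) - c₁ * Real.cos (θ t)) t)
    (hn₃ : HasDerivAt (fun τ => Real.cos (θ τ))
      (c₁ * (Real.sin (θ t) * Real.sin (φ t)) - c₂ * (Real.sin (θ t) * Real.cos (φ t))) t) :
    θ' = c₂ * Real.cos (φ t) - c₁ * Real.sin (φ t) ∧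
      φ' * Real.sin (θ t) = c₃ * Real.sin (θ t)
        - (c₁ * Real.cos (φ t) + c₂ * Real.sin (φ t)) * Real.cos (θ t) := by
  have e₁ := hn₁.unique (hθ.sin.mul hφ.cos)
  have e₂ := hn₂.unique (hθ.sin.mul hφ.sin)
  have e₃ := hn₃.unique hθ.cos
  refine ⟨mul_left_cancel₀ hsin ?_, ?_⟩
  · linear_combination e₃
  · linear_combination Real.sin (φ t) * e₁ - Real.cos (φ t) * e₂
      + (c₃ * Real.sin (θ t) - φ' * Real.sin (θ t)) * Real.sin_sq_add_cos_sq (φ t)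

theorem Continuous.exists_contDiff_hasDerivAt {g : ℝ → ℝ} (hg : Continuous g) :
    ∃ α : ℝ → ℝ, ContDiff ℝ 1 α ∧ α 0 = 0 ∧ ∀ τ, HasDerivAt α (g τ) τ := by
  have hα (τ : ℝ) := (hg.integral_hasStrictDerivAt 0 τ).hasDerivAt
  refine ⟨fun τ => ∫ x in (0 : ℝ)..τ, g x, contDiff_one_iff_deriv.2
    ⟨fun τ => (hα τ).differentiableAt, ?_⟩, intervalIntegral.integral_same, hα⟩
  rwa [show deriv (fun τ => ∫ x in (0 : ℝ)..τ, g x) = g from funext fun τ => (hα τ).deriv]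

theorem stmt_17_general {H : Type*} [NormedAddCommGroup H] [InnerProductSpace ℂ H] [CompleteSpace H]
    (S₁ S₂ S₃ : H →L[ℂ] H)
    (h12 : S₁ ∘L S₂ - S₂ ∘L S₁ = Complex.I • S₃)
    (h23 : S₂ ∘L S₃ - S₃ ∘L S₂ = Complex.I • S₁)
    (h31 : S₃ ∘L S₁ - S₁ ∘L S₃ = Complex.I • S₂)
    (s : ℝ)
    (ψ₀ : H)
    (hS3ψ₀ : S₃ ψ₀ = -((s : ℂ) • ψ₀))
    (C₁ C₂ C₃ : ℝ → ℝ) (hC₁ : Continuous C₁) (hC₂ : Continuous C₂) (hC₃ : Continuous C₃)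
    (θ φ : ℝ → ℝ) (hθ : ContDiff ℝ 1 θ) (hφ : ContDiff ℝ 1 φ)
    (hθrange : ∀ t, θ t ∈ Set.Ioo 0 Real.pi)
    -- the unit vector n(t) = (sinθ cosφ, sinθ sinφ, cosθ) solves ṅ = C × n :
    (hLL1 : ∀ t, HasDerivAt (fun τ => Real.sin (θ τ) * Real.cos (φ τ))
      (C₂ t * Real.cos (θ t) - C₃ t * (Real.sin (θ t) * Real.sin (φ t))) t)
    (hLL2 : ∀ t, HasDerivAt (fun τ => Real.sin (θ τ) * Real.sin (φ τ))
      (C₃ t * (Real.sin (θ t) * Real.cos (φ t)) - C₁ t * Real.cos (θ t)) t)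
    (hLL3 : ∀ t, HasDerivAt (fun τ => Real.cos (θ τ))
      (C₁ t * (Real.sin (θ t) * Real.sin (φ t)) - C₂ t * (Real.sin (θ t) * Real.cos (φ t))) t) :
    let T : ℝ → ℝ → (H →L[ℂ] H) := fun ϑ ϕ =>
      NormedSpace.exp (((ϑ : ℂ) / 2) • (Complex.exp (Complex.I * ϕ) • (S₁ - Complex.I • S₂)
        - Complex.exp (-(Complex.I * ϕ)) • (S₁ + Complex.I • S₂)))
    ∃ α : ℝ → ℝ, ContDiff ℝ 1 α ∧ α 0 = 0 ∧
      (Complex.exp (Complex.I * s * α 0) • (T (θ 0) (φ 0)) ψ₀ = (T (θ 0) (φ 0)) ψ₀) ∧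
      ∀ t, HasDerivAt
        (fun τ => Complex.exp (Complex.I * s * α τ) • (T (θ τ) (φ τ)) ψ₀)
        ((-Complex.I) • (((C₁ t : ℂ) • S₁ + (C₂ t : ℂ) • S₂ + (C₃ t : ℂ) • S₃)
          (Complex.exp (Complex.I * s * α t) • (T (θ t) (φ t)) ψ₀))) t := by
  intro T
  have so3 := isSo3Triple_neg_I_smul h12 h23 h31
  have hθd (τ : ℝ) : HasDerivAt θ (deriv θ τ) τ := (hθ.differentiable one_ne_zero τ).hasDerivAt
  have hφd (τ : ℝ) : HasDerivAt φ (deriv φ τ) τ := (hφ.differentiable one_ne_zero τ).hasDerivAt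
  have heuler (τ : ℝ) := euler_angles_of_landauLifshitz (hθd τ) (hφd τ)
    (Real.sin_pos_of_pos_of_lt_pi (hθrange τ).1 (hθrange τ).2).ne' (hLL1 τ) (hLL2 τ) (hLL3 τ)
  have hg : Continuous fun τ => deriv φ τ * (1 - Real.cos (θ τ))
      + (C₁ τ * (Real.sin (θ τ) * Real.cos (φ τ)) + C₂ τ * (Real.sin (θ τ) * Real.sin (φ τ))
        + C₃ τ * Real.cos (θ τ)) := by
    have := hφ.continuous_deriv le_rfl
    have := hθ.continuous
    have := hφ.continuous
    fun_prop
  obtain ⟨α, hα_smooth, hα₀, hα⟩ := hg.exists_contDiff_hasDerivAt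
  refine ⟨α, hα_smooth, hα₀, by simp [hα₀], fun τ => ?_⟩
  simp only [T, so3.smul_exp_ladder_apply hS3ψ₀]
  refine (so3.hasDerivAt_exp_mul_exp_mul_exp (hφd τ) (hθd τ) ((hα τ).sub (hφd τ))
    (heuler τ).2 (heuler τ).1 (by ring)).clm_apply_const ψ₀ |>.congr_deriv ?_
  simp only [mul_apply_eq_comp, add_apply, smul_apply]
  module

/-- For a purely time-dependent field `C(t)`, the spin coherent state propagated
along the Landau–Lifshitz flow solves the Schrödinger equation
`iΨ̇ = (C₁S₁ + C₂S₂ + C₃S₃)Ψ` exactly, up to a real phase `s·α(t)`. -/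
theorem stmt_17 {H : Type*} [NormedAddCommGroup H] [InnerProductSpace ℂ H] [CompleteSpace H]
    (S₁ S₂ S₃ : H →L[ℂ] H)
    (h12 : S₁ ∘L S₂ - S₂ ∘L S₁ = Complex.I • S₃)
    (h23 : S₂ ∘L S₃ - S₃ ∘L S₂ = Complex.I • S₁)
    (h31 : S₃ ∘L S₁ - S₁ ∘L S₃ = Complex.I • S₂)
    (hsa1 : IsSelfAdjoint S₁) (hsa2 : IsSelfAdjoint S₂) (hsa3 : IsSelfAdjoint S₃)
    (s : ℝ) (hs : 0 < s)
    (ψ₀ : H) (hψ₀ : ‖ψ₀‖ = 1)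
    (hS3ψ₀ : S₃ ψ₀ = -((s : ℂ) • ψ₀))
    (hSmψ₀ : (S₁ - Complex.I • S₂) ψ₀ = 0)
    (C₁ C₂ C₃ : ℝ → ℝ) (hC₁ : Continuous C₁) (hC₂ : Continuous C₂) (hC₃ : Continuous C₃)
    (θ φ : ℝ → ℝ) (hθ : ContDiff ℝ 1 θ) (hφ : ContDiff ℝ 1 φ)
    (hθrange : ∀ t, θ t ∈ Set.Ioo 0 Real.pi)
    -- the unit vector n(t) = (sinθ cosφ, sinθ sinφ, cosθ) solves ṅ = C × n :
    (hLL1 : ∀ t, HasDerivAt (fun τ => Real.sin (θ τ) * Real.cos (φ τ))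
      (C₂ t * Real.cos (θ t) - C₃ t * (Real.sin (θ t) * Real.sin (φ t))) t)
    (hLL2 : ∀ t, HasDerivAt (fun τ => Real.sin (θ τ) * Real.sin (φ τ))
      (C₃ t * (Real.sin (θ t) * Real.cos (φ t)) - C₁ t * Real.cos (θ t)) t)
    (hLL3 : ∀ t, HasDerivAt (fun τ => Real.cos (θ τ))
      (C₁ t * (Real.sin (θ t) * Real.sin (φ t)) - C₂ t * (Real.sin (θ t) * Real.cos (φ t))) t) :
    let T : ℝ → ℝ → (H →L[ℂ] H) := fun ϑ ϕ =>
      NormedSpace.exp (((ϑ : ℂ) / 2) • (Complex.exp (Complex.I * ϕ) • (S₁ - Complex.I • S₂)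
        - Complex.exp (-(Complex.I * ϕ)) • (S₁ + Complex.I • S₂)))
    ∃ α : ℝ → ℝ, ContDiff ℝ 1 α ∧ α 0 = 0 ∧
      (Complex.exp (Complex.I * s * α 0) • (T (θ 0) (φ 0)) ψ₀ = (T (θ 0) (φ 0)) ψ₀) ∧
      ∀ t, HasDerivAt
        (fun τ => Complex.exp (Complex.I * s * α τ) • (T (θ τ) (φ τ)) ψ₀)
        ((-Complex.I) • (((C₁ t : ℂ) • S₁ + (C₂ t : ℂ) • S₂ + (C₃ t : ℂ) • S₃)
          (Complex.exp (Complex.I * s * α t) • (T (θ t) (φ t)) ψ₀))) t :=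
  stmt_17_general S₁ S₂ S₃ h12 h23 h31 s ψ₀ hS3ψ₀ C₁ C₂ C₃ hC₁ hC₂ hC₃ θ φ hθ hφ hθrange hLL1 hLL2
    hLL3
end

section
/- Let N ∈ ℕ. For η ∈ ℂ define the unit vector ψ(η) ∈ ℂ^{N+1} by ψ(η)_k = √(binom(N,k)) · η^k · (1+|η|²)^{−N/2} for 0 ≤ k ≤ N. Let n, m be unit vectors in ℝ³ with n₃ ≠ −1, m₃ ≠ −1, and set η = (−n₁ + i n₂)/(1 + n₃), η' = (−m₁ + i m₂)/(1 + m₃). Then ‖ψ(η) − ψ(η')‖² ≥ 2·( 1 − (1 − |n−m|²/4)^{N/2} ) ≥ 2·( 1 − exp( −N·|n−m|²/8 ) ), where ‖·‖ is the norm of the standard Hermitian inner product on ℂ^{N+1}. -/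
/-!
By the binomial theorem `⟪ψ(η), ψ(η')⟫ = (1 + η̄η')ᴺ / ((1 + |η|²)(1 + |η'|²))^{N/2}`, so the
states have norm one and `‖ψ(η) − ψ(η')‖² = 2 − 2 Re⟪ψ(η), ψ(η')⟫ ≥ 2 (1 − F^{N/2})` with
`F = |1 + η̄η'|² / ((1 + |η|²)(1 + |η'|²))`. In the stereographic coordinates of `n` and `m`,
`F = (1 + n·m)/2 = 1 − |n − m|²/4`, and the exponential bound is `1 − t ≤ e^{−t}`.
-/

open Complex ComplexConjugate

noncomputable def coherentState (N : ℕ) (η : ℂ) : EuclideanSpace ℂ (Fin (N + 1)) :=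
  (WithLp.equiv 2 (Fin (N + 1) → ℂ)).symm (fun k =>
    (Real.sqrt (N.choose k) : ℂ) * η ^ (k : ℕ)
      * (((1 + ‖η‖ ^ 2) ^ (-(N : ℝ) / 2) : ℝ) : ℂ))

/-- The squared overlap of the spin-`1/2` coherent states `coherentState 1 η`, `coherentState 1 η'`. -/
noncomputable def coherentOverlap (η η' : ℂ) : ℝ :=
  ‖1 + conj η * η'‖ ^ 2 / ((1 + ‖η‖ ^ 2) * (1 + ‖η'‖ ^ 2))

theorem coherentOverlap_nonneg (η η' : ℂ) : 0 ≤ coherentOverlap η η' := by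
  unfold coherentOverlap
  positivity

theorem coherentOverlap_self (η : ℂ) : coherentOverlap η η = 1 := by
  rw [coherentOverlap, conj_mul', ← ofReal_pow, ← ofReal_one, ← ofReal_add, norm_real,
    Real.norm_of_nonneg (by positivity), ← sq, div_self (by positivity)]

theorem inner_coherentState (N : ℕ) (η η' : ℂ) :
    inner ℂ (coherentState N η) (coherentState N η')
      = (1 + conj η * η') ^ N
        * (((1 + ‖η‖ ^ 2) ^ (-(N : ℝ) / 2) * (1 + ‖η'‖ ^ 2) ^ (-(N : ℝ) / 2) : ℝ) : ℂ) := by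
  have hchoose (k : ℕ) : (Real.sqrt (N.choose k) : ℂ) * Real.sqrt (N.choose k) = N.choose k := by
    rw [← ofReal_mul, Real.mul_self_sqrt (Nat.cast_nonneg _), ofReal_natCast]
  simp only [coherentState, PiLp.inner_apply, WithLp.equiv_symm_apply, RCLike.inner_apply',
    map_mul, map_pow, conj_ofReal]
  rw [add_comm 1 (conj η * η'), add_pow, ofReal_mul, Finset.sum_mul, Finset.sum_range]
  refine Finset.sum_congr rfl fun k _ => ?_
  linear_combination (conj η ^ (k : ℕ) * η' ^ (k : ℕ) * ((1 + ‖η‖ ^ 2) ^ (-(N : ℝ) / 2) : ℝ)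
    * ((1 + ‖η'‖ ^ 2) ^ (-(N : ℝ) / 2) : ℝ)) * hchoose k

theorem norm_inner_coherentState (N : ℕ) (η η' : ℂ) :
    ‖inner ℂ (coherentState N η) (coherentState N η')‖
      = coherentOverlap η η' ^ ((N : ℝ) / 2) := by
  have h : 0 < 1 + ‖η‖ ^ 2 := by positivity
  have h' : 0 < 1 + ‖η'‖ ^ 2 := by positivity
  have hpow : (‖1 + conj η * η'‖ ^ 2) ^ ((N : ℝ) / 2) = ‖1 + conj η * η'‖ ^ N := by
    rw [← Real.rpow_natCast_mul (norm_nonneg _), ← Real.rpow_natCast]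
    congr 1
    push_cast
    ring
  rw [inner_coherentState, coherentOverlap, norm_mul, norm_pow, norm_real,
    Real.norm_of_nonneg (by positivity), Real.div_rpow (by positivity) (by positivity),
    Real.mul_rpow h.le h'.le, neg_div, Real.rpow_neg h.le, Real.rpow_neg h'.le, hpow]
  ring

theorem norm_coherentState (N : ℕ) (η : ℂ) : ‖coherentState N η‖ = 1 := by
  have h := norm_inner_coherentState N η η
  rw [inner_self_eq_norm_sq_to_K, norm_pow, RCLike.norm_ofReal, abs_norm, coherentOverlap_self,
    Real.one_rpow] at h
  exact (pow_eq_one_iff_of_nonneg (norm_nonneg _) two_ne_zero).mp h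

theorem two_mul_one_sub_norm_inner_le_norm_sub_sq {𝕜 E : Type*} [RCLike 𝕜]
    [NormedAddCommGroup E] [InnerProductSpace 𝕜 E] {u v : E} (hu : ‖u‖ = 1) (hv : ‖v‖ = 1) :
    2 * (1 - ‖inner 𝕜 u v‖) ≤ ‖u - v‖ ^ 2 := by
  rw [@norm_sub_sq 𝕜, hu, hv]
  linarith [RCLike.re_le_norm (inner 𝕜 u v)]

noncomputable def stereographicCoord (x y z : ℝ) : ℂ := (-(x : ℂ) + I * y) / ((1 + z : ℝ) : ℂ)

theorem stereographicCoord_eq (x y z : ℝ) :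
    stereographicCoord x y z = ⟨-x / (1 + z), y / (1 + z)⟩ := by
  apply Complex.ext <;> simp [stereographicCoord, div_ofReal_re, div_ofReal_im, -ofReal_add]

section Stereographic

variable {x y z x' y' z' : ℝ}

theorem one_add_norm_stereographicCoord_sq (h : x ^ 2 + y ^ 2 + z ^ 2 = 1) (hz : 1 + z ≠ 0) :
    1 + ‖stereographicCoord x y z‖ ^ 2 = 2 / (1 + z) := by
  rw [Complex.sq_norm, stereographicCoord_eq, normSq_mk]
  field_simp
  linear_combination h

theorem norm_one_add_conj_mul_stereographicCoord_sq (h : x ^ 2 + y ^ 2 + z ^ 2 = 1)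
    (h' : x' ^ 2 + y' ^ 2 + z' ^ 2 = 1) (hz : 1 + z ≠ 0) (hz' : 1 + z' ≠ 0) :
    ‖1 + conj (stereographicCoord x y z) * stereographicCoord x' y' z'‖ ^ 2
      = 2 * (1 + (x * x' + y * y' + z * z')) / ((1 + z) * (1 + z')) := by
  rw [Complex.sq_norm, stereographicCoord_eq, stereographicCoord_eq, normSq_apply]
  simp only [add_re, add_im, one_re, one_im, mul_re, mul_im, conj_re, conj_im]
  field_simp
  linear_combination (x ^ 2 + y ^ 2) * h' + (1 - z' ^ 2) * h

theorem coherentOverlap_stereographicCoord (h : x ^ 2 + y ^ 2 + z ^ 2 = 1)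
    (h' : x' ^ 2 + y' ^ 2 + z' ^ 2 = 1) (hz : z ≠ -1) (hz' : z' ≠ -1) :
    coherentOverlap (stereographicCoord x y z) (stereographicCoord x' y' z')
      = 1 - ((x - x') ^ 2 + (y - y') ^ 2 + (z - z') ^ 2) / 4 := by
  have hz₀ : 1 + z ≠ 0 := fun h => hz (by linarith)
  have hz₀' : 1 + z' ≠ 0 := fun h => hz' (by linarith)
  rw [coherentOverlap, norm_one_add_conj_mul_stereographicCoord_sq h h' hz₀ hz₀',
    one_add_norm_stereographicCoord_sq h hz₀, one_add_norm_stereographicCoord_sq h' hz₀']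
  field_simp
  linear_combination 2 * h + 2 * h'

end Stereographic

theorem Real.one_sub_rpow_le_exp {t a : ℝ} (ht : t ≤ 1) (ha : 0 ≤ a) :
    (1 - t) ^ a ≤ Real.exp (-(a * t)) := by
  calc (1 - t) ^ a ≤ Real.exp (-t) ^ a :=
        Real.rpow_le_rpow (by linarith) (Real.one_sub_le_exp_neg t) ha
    _ = Real.exp (-(a * t)) := by rw [← Real.exp_mul]; ring_nf

/-- Quantitative lower bound for the distance between two spin-`N/2` coherent
states: `‖ψ(η) − ψ(η')‖² ≥ 2(1 − (1−|n−m|²/4)^{N/2}) ≥ 2(1 − e^{−N|n−m|²/8})`. -/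
theorem stmt_19 (N : ℕ) (n₁ n₂ n₃ m₁ m₂ m₃ : ℝ)
    (hn : n₁ ^ 2 + n₂ ^ 2 + n₃ ^ 2 = 1) (hm : m₁ ^ 2 + m₂ ^ 2 + m₃ ^ 2 = 1)
    (hn3 : n₃ ≠ -1) (hm3 : m₃ ≠ -1) :
    let ψ : ℂ → EuclideanSpace ℂ (Fin (N + 1)) := fun η =>
      (WithLp.equiv 2 (Fin (N + 1) → ℂ)).symm (fun k =>
        (Real.sqrt (N.choose k) : ℂ) * η ^ (k : ℕ)
          * (((1 + ‖η‖ ^ 2) ^ (-(N : ℝ) / 2) : ℝ) : ℂ))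
    let η : ℂ := (-(n₁ : ℂ) + Complex.I * (n₂ : ℂ)) / ((1 + n₃ : ℝ) : ℂ)
    let η' : ℂ := (-(m₁ : ℂ) + Complex.I * (m₂ : ℂ)) / ((1 + m₃ : ℝ) : ℂ)
    let dsq : ℝ := (n₁ - m₁) ^ 2 + (n₂ - m₂) ^ 2 + (n₃ - m₃) ^ 2
    (2 * (1 - (1 - dsq / 4) ^ ((N : ℝ) / 2)) ≤ ‖ψ η - ψ η'‖ ^ 2)
    ∧ (2 * (1 - Real.exp (-((N : ℝ) * dsq / 8)))
        ≤ 2 * (1 - (1 - dsq / 4) ^ ((N : ℝ) / 2))) := by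
  intro ψ η η' dsq
  have hoverlap : coherentOverlap η η' = 1 - dsq / 4 :=
    coherentOverlap_stereographicCoord hn hm hn3 hm3
  refine ⟨?_, ?_⟩
  · have h := two_mul_one_sub_norm_inner_le_norm_sub_sq (𝕜 := ℂ)
      (norm_coherentState N η) (norm_coherentState N η')
    rwa [norm_inner_coherentState, hoverlap] at h
  · have hdsq : dsq / 4 ≤ 1 := by linarith [hoverlap ▸ coherentOverlap_nonneg η η']
    have h := Real.one_sub_rpow_le_exp hdsq (by positivity : (0 : ℝ) ≤ N / 2)
    rw [show -((N : ℝ) / 2 * (dsq / 4)) = -(N * dsq / 8) by ring] at h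
    linarith
end
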